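/- arXiv:2201.11545 — 2 statements merged into one kernel-verified Lean document; each statement's English description precedes it below -/
import Mathlib

section
/- Suppose T is tiled by tiles T₁,…,Tₙ, where T and each Tᵢ is either a trapezoid with two horizontal sides or a triangle with a horizontal side. Then the intersection of the interior of T with the union of the boundaries of T₁,…,Tₙ can be covered by at most n−1 lines. -/
/-- A "horizontal trapezoid or triangle": the convex hull of four points
(l₁,y₁),(r₁,y₁),(l₂,y₂),(r₂,y₂) with y₁ < y₂, l₁ ≤ r₁, l₂ ≤ r₂ and at least one of the
two horizontal sides nondegenerate. This includes trapezoids with two horizontal sides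
and triangles with a horizontal side. -/
def IsHorizTrapOrTri (S : Set (ℝ × ℝ)) : Prop :=
  ∃ (y₁ y₂ l₁ r₁ l₂ r₂ : ℝ), y₁ < y₂ ∧ l₁ ≤ r₁ ∧ l₂ ≤ r₂ ∧ (l₁ < r₁ ∨ l₂ < r₂) ∧
    S = convexHull ℝ {(l₁, y₁), (r₁, y₁), (l₂, y₂), (r₂, y₂)}


noncomputable section TrapTile

def lineSet (p q : ℝ × ℝ) : Set (ℝ × ℝ) := {z : ℝ × ℝ | ∃ t : ℝ, z = p + t • (q - p)}

lemma lineSet_trans {p q u v z : ℝ × ℝ} (hu : u ∈ lineSet p q) (hv : v ∈ lineSet p q)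
    (huv : u ≠ v) (hz : z ∈ lineSet u v) : z ∈ lineSet p q := by
  obtain ⟨s, hs⟩ := hu
  obtain ⟨r, hr⟩ := hv
  obtain ⟨t, ht⟩ := hz
  refine ⟨s + t * (r - s), ?_⟩
  subst hs hr ht
  ext <;> simp [Prod.ext_iff] <;> ring


lemma pair_comb (α β x x' y y' : ℝ) :
    α • ((x,y) : ℝ × ℝ) + β • ((x',y') : ℝ × ℝ) = (α*x+β*x', α*y+β*y') := by
  ext <;> simp

structure Trap where
  a : ℝ
  b : ℝ
  l1 : ℝ
  r1 : ℝ
  l2 : ℝ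
  r2 : ℝ
  hab : a < b
  h1 : l1 ≤ r1
  h2 : l2 ≤ r2
  hnd : l1 < r1 ∨ l2 < r2

namespace Trap

variable (t : Trap)

def L (y : ℝ) : ℝ := (t.l1 * (t.b - y) + t.l2 * (y - t.a)) / (t.b - t.a)

def R (y : ℝ) : ℝ := (t.r1 * (t.b - y) + t.r2 * (y - t.a)) / (t.b - t.a)

lemma bsub_pos : (0:ℝ) < t.b - t.a := sub_pos.mpr t.hab

def set : Set (ℝ × ℝ) :=
  {z : ℝ × ℝ | t.a ≤ z.2 ∧ z.2 ≤ t.b ∧ t.L z.2 ≤ z.1 ∧ z.1 ≤ t.R z.2}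

lemma L_a : t.L t.a = t.l1 := by have := t.bsub_pos; unfold L; rw [div_eq_iff this.ne']; ring
lemma L_b : t.L t.b = t.l2 := by have := t.bsub_pos; unfold L; rw [div_eq_iff this.ne']; ring
lemma R_a : t.R t.a = t.r1 := by have := t.bsub_pos; unfold R; rw [div_eq_iff this.ne']; ring
lemma R_b : t.R t.b = t.r2 := by have := t.bsub_pos; unfold R; rw [div_eq_iff this.ne']; ring

lemma L_comb (y1 y2 s : ℝ) : t.L ((1-s) * y1 + s * y2) = (1-s) * t.L y1 + s * t.L y2 := by
  have h := t.bsub_pos.ne'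
  unfold L; field_simp; ring

lemma R_comb (y1 y2 s : ℝ) : t.R ((1-s) * y1 + s * y2) = (1-s) * t.R y1 + s * t.R y2 := by
  have h := t.bsub_pos.ne'
  unfold R; field_simp; ring

lemma L_affine (y : ℝ) : t.L y = t.L 0 + y * (t.L 1 - t.L 0) := by
  have h := t.bsub_pos.ne'
  unfold L; field_simp; ring

lemma R_affine (y : ℝ) : t.R y = t.R 0 + y * (t.R 1 - t.R 0) := by
  have h := t.bsub_pos.ne'
  unfold R; field_simp; ring

/-- the width is positive strictly between the two levels -/
lemma width_pos {y : ℝ} (h1 : t.a < y) (h2 : y < t.b) : t.L y < t.R y := by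
  have hb := t.bsub_pos
  have hy : y = (1 - (y - t.a)/(t.b - t.a)) * t.a + ((y - t.a)/(t.b - t.a)) * t.b := by
    field_simp; ring
  set s := (y - t.a)/(t.b - t.a) with hs
  have hs0 : 0 < s := div_pos (by linarith) hb
  have hs1 : s < 1 := (div_lt_one hb).mpr (by linarith)
  have hL : t.L y = (1-s) * t.l1 + s * t.l2 := by
    rw [hy, L_comb, L_a, L_b]
  have hR : t.R y = (1-s) * t.r1 + s * t.r2 := by
    rw [hy, R_comb, R_a, R_b]
  rw [hL, hR]
  rcases t.hnd with h | h
  · nlinarith [t.h2]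
  · nlinarith [t.h1]

lemma L_le_R {y : ℝ} (h1 : t.a ≤ y) (h2 : y ≤ t.b) : t.L y ≤ t.R y := by
  have hb := t.bsub_pos
  have hy : y = (1 - (y - t.a)/(t.b - t.a)) * t.a + ((y - t.a)/(t.b - t.a)) * t.b := by
    field_simp; ring
  set s := (y - t.a)/(t.b - t.a) with hs
  have hs0 : 0 ≤ s := div_nonneg (by linarith) hb.le
  have hs1 : s ≤ 1 := (div_le_one hb).mpr (by linarith)
  have hL : t.L y = (1-s) * t.l1 + s * t.l2 := by rw [hy, L_comb, L_a, L_b]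
  have hR : t.R y = (1-s) * t.r1 + s * t.r2 := by rw [hy, R_comb, R_a, R_b]
  rw [hL, hR]
  nlinarith [t.h1, t.h2]

lemma convex : Convex ℝ t.set := by
  intro x hx y hy α β hα hβ hαβ
  obtain ⟨hx1, hx2, hx3, hx4⟩ := hx
  obtain ⟨hy1, hy2, hy3, hy4⟩ := hy
  have h2 : (α • x + β • y).2 = α * x.2 + β * y.2 := rfl
  have h1 : (α • x + β • y).1 = α * x.1 + β * y.1 := rfl
  have hcomb : α * x.2 + β * y.2 = (1 - β) * x.2 + β * y.2 := by
    rw [show α = 1 - β by linarith]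
  have hLc : t.L (α * x.2 + β * y.2) = α * t.L x.2 + β * t.L y.2 := by
    rw [hcomb, L_comb]; rw [show α = 1 - β by linarith]
  have hRc : t.R (α * x.2 + β * y.2) = α * t.R x.2 + β * t.R y.2 := by
    rw [hcomb, R_comb]; rw [show α = 1 - β by linarith]
  refine ⟨?_, ?_, ?_, ?_⟩
  · rw [h2]; nlinarith
  · rw [h2]; nlinarith
  · rw [h1, h2, hLc]; nlinarith
  · rw [h1, h2, hRc]; nlinarith

lemma corner1_mem : ((t.l1, t.a) : ℝ × ℝ) ∈ t.set :=
  ⟨le_refl _, t.hab.le, by rw [L_a], by rw [R_a]; exact t.h1⟩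
lemma corner2_mem : ((t.r1, t.a) : ℝ × ℝ) ∈ t.set :=
  ⟨le_refl _, t.hab.le, by rw [L_a]; exact t.h1, by rw [R_a]⟩
lemma corner3_mem : ((t.l2, t.b) : ℝ × ℝ) ∈ t.set :=
  ⟨t.hab.le, le_refl _, by rw [L_b], by rw [R_b]; exact t.h2⟩
lemma corner4_mem : ((t.r2, t.b) : ℝ × ℝ) ∈ t.set :=
  ⟨t.hab.le, le_refl _, by rw [L_b]; exact t.h2, by rw [R_b]⟩

lemma set_eq_hull :
    t.set = convexHull ℝ {((t.l1, t.a) : ℝ × ℝ), (t.r1, t.a), (t.l2, t.b), (t.r2, t.b)} := by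
  apply Set.Subset.antisymm
  · -- set ⊆ hull
    intro z hz
    obtain ⟨hz1, hz2, hz3, hz4⟩ := hz
    have hb := t.bsub_pos
    set s := (z.2 - t.a)/(t.b - t.a) with hsdef
    have hs0 : 0 ≤ s := div_nonneg (by linarith) hb.le
    have hs1 : s ≤ 1 := (div_le_one hb).mpr (by linarith)
    have hy : z.2 = (1 - s) * t.a + s * t.b := by rw [hsdef]; field_simp; ring
    have hL : t.L z.2 = (1-s) * t.l1 + s * t.l2 := by rw [hy, L_comb, L_a, L_b]
    have hR : t.R z.2 = (1-s) * t.r1 + s * t.r2 := by rw [hy, R_comb, R_a, R_b]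
    have hmem1 : ((t.l1, t.a) : ℝ × ℝ) ∈ convexHull ℝ
        {((t.l1, t.a) : ℝ × ℝ), (t.r1, t.a), (t.l2, t.b), (t.r2, t.b)} :=
      subset_convexHull ℝ _ (by simp)
    have hmem2 : ((t.r1, t.a) : ℝ × ℝ) ∈ convexHull ℝ
        {((t.l1, t.a) : ℝ × ℝ), (t.r1, t.a), (t.l2, t.b), (t.r2, t.b)} :=
      subset_convexHull ℝ _ (by simp)
    have hmem3 : ((t.l2, t.b) : ℝ × ℝ) ∈ convexHull ℝ
        {((t.l1, t.a) : ℝ × ℝ), (t.r1, t.a), (t.l2, t.b), (t.r2, t.b)} :=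
      subset_convexHull ℝ _ (by simp)
    have hmem4 : ((t.r2, t.b) : ℝ × ℝ) ∈ convexHull ℝ
        {((t.l1, t.a) : ℝ × ℝ), (t.r1, t.a), (t.l2, t.b), (t.r2, t.b)} :=
      subset_convexHull ℝ _ (by simp)
    have hconv := convex_convexHull ℝ
        ({((t.l1, t.a) : ℝ × ℝ), (t.r1, t.a), (t.l2, t.b), (t.r2, t.b)} : Set (ℝ × ℝ))
    have hlz : ((t.L z.2, z.2) : ℝ × ℝ) ∈ convexHull ℝ
        {((t.l1, t.a) : ℝ × ℝ), (t.r1, t.a), (t.l2, t.b), (t.r2, t.b)} := by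
      have h := hconv hmem1 hmem3 (by linarith : (0:ℝ) ≤ 1 - s) hs0 (by ring)
      rw [pair_comb] at h
      have he : ((t.L z.2, z.2) : ℝ × ℝ) = ((1-s)*t.l1 + s*t.l2, (1-s)*t.a + s*t.b) := by
        rw [Prod.ext_iff]; exact ⟨by rw [hL], hy⟩
      rw [he]; exact h
    have hrz : ((t.R z.2, z.2) : ℝ × ℝ) ∈ convexHull ℝ
        {((t.l1, t.a) : ℝ × ℝ), (t.r1, t.a), (t.l2, t.b), (t.r2, t.b)} := by
      have h := hconv hmem2 hmem4 (by linarith : (0:ℝ) ≤ 1 - s) hs0 (by ring)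
      rw [pair_comb] at h
      have he : ((t.R z.2, z.2) : ℝ × ℝ) = ((1-s)*t.r1 + s*t.r2, (1-s)*t.a + s*t.b) := by
        rw [Prod.ext_iff]; exact ⟨by rw [hR], hy⟩
      rw [he]; exact h
    -- now z is between lz and rz
    rcases eq_or_lt_of_le (t.L_le_R hz1 hz2) with heq | hlt
    · have : z = ((t.L z.2, z.2) : ℝ × ℝ) := by
        have : z.1 = t.L z.2 := le_antisymm (heq ▸ hz4) hz3
        ext <;> simp [this]
      rw [this]; exact hlz
    · set u := (z.1 - t.L z.2)/(t.R z.2 - t.L z.2) with hu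
      have hu0 : 0 ≤ u := div_nonneg (by linarith) (by linarith)
      have hu1 : u ≤ 1 := (div_le_one (by linarith)).mpr (by linarith)
      have h := hconv hlz hrz (by linarith : (0:ℝ) ≤ 1 - u) hu0 (by ring)
      have hlz' : ((t.L z.2, z.2) : ℝ × ℝ) = (t.L z.2, z.2) := rfl
      rw [show ((t.L z.2, z.2) : ℝ × ℝ) = ((t.L z.2 : ℝ), (z.2 : ℝ)) from rfl] at h
      rw [pair_comb] at h
      have he : z = (((1-u)*t.L z.2 + u*t.R z.2 : ℝ), ((1-u)*z.2 + u*z.2 : ℝ)) := by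
        rw [Prod.ext_iff]
        constructor
        · have hmul : u * (t.R z.2 - t.L z.2) = z.1 - t.L z.2 :=
            div_mul_cancel₀ _ (ne_of_gt (by linarith))
          simp only []
          linear_combination -hmul
        · simp only []; ring
      rw [he]; exact h
  · -- hull ⊆ set
    apply convexHull_min _ t.convex
    intro z hz
    simp only [Set.mem_insert_iff, Set.mem_singleton_iff] at hz
    rcases hz with h | h | h | h <;> subst h
    exacts [t.corner1_mem, t.corner2_mem, t.corner3_mem, t.corner4_mem]

lemma contL : Continuous (fun z : ℝ × ℝ => t.L z.2) := by
  unfold L; fun_prop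

lemma contR : Continuous (fun z : ℝ × ℝ => t.R z.2) := by
  unfold R; fun_prop

def istrict : Set (ℝ × ℝ) :=
  {z : ℝ × ℝ | t.a < z.2 ∧ z.2 < t.b ∧ t.L z.2 < z.1 ∧ z.1 < t.R z.2}

lemma istrict_open : IsOpen t.istrict := by
  have h1 : IsOpen {z : ℝ × ℝ | t.a < z.2} := isOpen_lt continuous_const continuous_snd
  have h2 : IsOpen {z : ℝ × ℝ | z.2 < t.b} := isOpen_lt continuous_snd continuous_const
  have h3 : IsOpen {z : ℝ × ℝ | t.L z.2 < z.1} := isOpen_lt t.contL continuous_fst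
  have h4 : IsOpen {z : ℝ × ℝ | z.1 < t.R z.2} := isOpen_lt continuous_fst t.contR
  have : t.istrict = {z : ℝ × ℝ | t.a < z.2} ∩ ({z : ℝ × ℝ | z.2 < t.b} ∩
      ({z : ℝ × ℝ | t.L z.2 < z.1} ∩ {z : ℝ × ℝ | z.1 < t.R z.2})) := by
    ext z; simp [istrict, Set.mem_setOf_eq, and_assoc]
  rw [this]
  exact h1.inter (h2.inter (h3.inter h4))

lemma isClosed_set : IsClosed t.set := by
  have h1 : IsClosed {z : ℝ × ℝ | t.a ≤ z.2} := isClosed_le continuous_const continuous_snd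
  have h2 : IsClosed {z : ℝ × ℝ | z.2 ≤ t.b} := isClosed_le continuous_snd continuous_const
  have h3 : IsClosed {z : ℝ × ℝ | t.L z.2 ≤ z.1} := isClosed_le t.contL continuous_fst
  have h4 : IsClosed {z : ℝ × ℝ | z.1 ≤ t.R z.2} := isClosed_le continuous_fst t.contR
  have : t.set = {z : ℝ × ℝ | t.a ≤ z.2} ∩ ({z : ℝ × ℝ | z.2 ≤ t.b} ∩
      ({z : ℝ × ℝ | t.L z.2 ≤ z.1} ∩ {z : ℝ × ℝ | z.1 ≤ t.R z.2})) := by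
    ext z; simp [set, Set.mem_setOf_eq, and_assoc]
  rw [this]
  exact h1.inter (h2.inter (h3.inter h4))

lemma istrict_subset : t.istrict ⊆ t.set :=
  fun z hz => ⟨hz.1.le, hz.2.1.le, hz.2.2.1.le, hz.2.2.2.le⟩

lemma interior_eq : interior t.set = t.istrict := by
  apply Set.Subset.antisymm
  · intro z hz
    rw [mem_interior_iff_mem_nhds, Metric.mem_nhds_iff] at hz
    obtain ⟨ε, hε, hball⟩ := hz
    set δ := ε/2 with hδ
    have hδ0 : 0 < δ := by positivity
    have hmem : ∀ w : ℝ × ℝ, dist w z < ε → w ∈ t.set := fun w hw => hball hw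
    have hdlt : ∀ u v : ℝ, |u| ≤ δ → |v| ≤ δ → ((z.1 + u, z.2 + v) : ℝ × ℝ) ∈ t.set := by
      intro u v hu hv
      apply hmem
      rw [Prod.dist_eq]
      have e1 : dist (z.1 + u) z.1 = |u| := by rw [Real.dist_eq]; ring_nf
      have e2 : dist (z.2 + v) z.2 = |v| := by rw [Real.dist_eq]; ring_nf
      calc max (dist ((z.1+u, z.2+v) : ℝ × ℝ).1 z.1) (dist ((z.1+u, z.2+v) : ℝ × ℝ).2 z.2)
          = max |u| |v| := by rw [show ((z.1+u, z.2+v) : ℝ × ℝ).1 = z.1 + u from rfl,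
            show ((z.1+u, z.2+v) : ℝ × ℝ).2 = z.2 + v from rfl, e1, e2]
        _ < ε := by rw [hδ] at hu hv; apply max_lt <;> linarith
    have habs : |δ| ≤ δ := by rw [abs_of_pos hδ0]
    have habs0 : |(0:ℝ)| ≤ δ := by simp; linarith
    have habsn : |(-δ)| ≤ δ := by rw [abs_neg, abs_of_pos hδ0]
    have hup : ((z.1, z.2 + δ) : ℝ × ℝ) ∈ t.set := by
      have := hdlt 0 δ habs0 habs; simpa using this
    have hdown : ((z.1, z.2 - δ) : ℝ × ℝ) ∈ t.set := by
      have := hdlt 0 (-δ) habs0 habsn; simpa [sub_eq_add_neg] using this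
    have hleft : ((z.1 - δ, z.2) : ℝ × ℝ) ∈ t.set := by
      have := hdlt (-δ) 0 habsn habs0; simpa [sub_eq_add_neg] using this
    have hright : ((z.1 + δ, z.2) : ℝ × ℝ) ∈ t.set := by
      have := hdlt δ 0 habs habs0; simpa using this
    refine ⟨?_, ?_, ?_, ?_⟩
    · have := hdown.1; simp at this; linarith
    · have := hup.2.1; simp at this; linarith
    · have := hleft.2.2.1; simp at this; linarith
    · have := hright.2.2.2; simp at this; linarith
  · exact interior_maximal t.istrict_subset t.istrict_open

lemma nonempty_interior : t.istrict.Nonempty := by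
  set y0 := (t.a + t.b)/2 with hy0
  have h1 : t.a < y0 := by rw [hy0]; linarith [t.hab]
  have h2 : y0 < t.b := by rw [hy0]; linarith [t.hab]
  have hw := t.width_pos h1 h2
  exact ⟨((t.L y0 + t.R y0)/2, y0), h1, h2, by simp; linarith, by simp; linarith⟩

/-- points of the tile are in the closure of the interior -/
lemma mem_closure_interior {z : ℝ × ℝ} (hz : z ∈ t.set) :
    ∀ U : Set (ℝ × ℝ), IsOpen U → z ∈ U → (U ∩ t.istrict).Nonempty := by
  intro U hU hzU
  obtain ⟨w, hw⟩ := t.nonempty_interior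
  have hseg : ∀ s : ℝ, 0 < s → s ≤ 1 → (1 - s) • z + s • w ∈ t.istrict := by
    intro s hs0 hs1
    obtain ⟨hw1, hw2, hw3, hw4⟩ := hw
    obtain ⟨hz1, hz2, hz3, hz4⟩ := hz
    have h2 : ((1 - s) • z + s • w).2 = (1-s) * z.2 + s * w.2 := rfl
    have h1 : ((1 - s) • z + s • w).1 = (1-s) * z.1 + s * w.1 := rfl
    have hLc := t.L_comb z.2 w.2 s
    have hRc := t.R_comb z.2 w.2 s
    refine ⟨?_, ?_, ?_, ?_⟩
    · rw [h2]; nlinarith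
    · rw [h2]; nlinarith
    · rw [h1, h2, hLc]; nlinarith
    · rw [h1, h2, hRc]; nlinarith
  have hcont : Continuous (fun s : ℝ => (1 - s) • z + s • w) := by fun_prop
  have hca : ContinuousAt (fun s : ℝ => (1 - s) • z + s • w) 0 := hcont.continuousAt
  have hz0 : (1 - (0:ℝ)) • z + (0:ℝ) • w = z := by simp
  have hUn : U ∈ nhds ((1 - (0:ℝ)) • z + (0:ℝ) • w) := by rw [hz0]; exact hU.mem_nhds hzU
  have hpre : (fun s : ℝ => (1 - s) • z + s • w) ⁻¹' U ∈ nhds (0:ℝ) := hca hUn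
  rw [Metric.mem_nhds_iff] at hpre
  obtain ⟨δ, hδ0, hδ⟩ := hpre
  set s := min (δ/2) 1 with hsdef
  have hs0 : 0 < s := lt_min (by linarith) one_pos
  have hs1 : s ≤ 1 := min_le_right _ _
  have hsδ : s ∈ Metric.ball (0:ℝ) δ := by
    rw [Metric.mem_ball, Real.dist_eq, sub_zero, abs_of_pos hs0]
    calc s ≤ δ/2 := min_le_left _ _
      _ < δ := by linarith
  exact ⟨(1 - s) • z + s • w, hδ hsδ, hseg s hs0 hs1⟩




def leftP : ℝ × ℝ := (t.L 0, 0)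
def leftQ : ℝ × ℝ := (t.L 1, 1)
def rightP : ℝ × ℝ := (t.R 0, 0)
def rightQ : ℝ × ℝ := (t.R 1, 1)

lemma leftP_ne : t.leftP ≠ t.leftQ := by
  simp [leftP, leftQ, Prod.ext_iff]

lemma rightP_ne : t.rightP ≠ t.rightQ := by
  simp [rightP, rightQ, Prod.ext_iff]

lemma mem_leftLine_iff (z : ℝ × ℝ) : z ∈ lineSet t.leftP t.leftQ ↔ z.1 = t.L z.2 := by
  constructor
  · rintro ⟨s, hs⟩
    have h2 : z.2 = s := by
      rw [hs]; simp [leftP, leftQ]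
    have h1 : z.1 = t.L 0 + s * (t.L 1 - t.L 0) := by
      rw [hs]; simp [leftP, leftQ]
    rw [h1, h2, ← L_affine]
  · intro h
    refine ⟨z.2, ?_⟩
    rw [Prod.ext_iff]
    constructor
    · show z.1 = (t.leftP + z.2 • (t.leftQ - t.leftP)).1
      simp [leftP, leftQ]
      rw [h, L_affine]
    · show z.2 = (t.leftP + z.2 • (t.leftQ - t.leftP)).2
      simp [leftP, leftQ]

lemma mem_rightLine_iff (z : ℝ × ℝ) : z ∈ lineSet t.rightP t.rightQ ↔ z.1 = t.R z.2 := by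
  constructor
  · rintro ⟨s, hs⟩
    have h2 : z.2 = s := by
      rw [hs]; simp [rightP, rightQ]
    have h1 : z.1 = t.R 0 + s * (t.R 1 - t.R 0) := by
      rw [hs]; simp [rightP, rightQ]
    rw [h1, h2, ← R_affine]
  · intro h
    refine ⟨z.2, ?_⟩
    rw [Prod.ext_iff]
    constructor
    · show z.1 = (t.rightP + z.2 • (t.rightQ - t.rightP)).1
      simp [rightP, rightQ]
      rw [h, R_affine]
    · show z.2 = (t.rightP + z.2 • (t.rightQ - t.rightP)).2
      simp [rightP, rightQ]

/-- limit along a direction -/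
lemma mem_of_dir {t : Trap} {z d : ℝ × ℝ} {ε₁ : ℝ} (hε₁ : 0 < ε₁)
    (h : ∀ ε : ℝ, 0 < ε → ε ≤ ε₁ → z + ε • d ∈ t.set) : z ∈ t.set := by
  have hcont : Continuous (fun ε : ℝ => z + ε • d) := by fun_prop
  have htt : Filter.Tendsto (fun ε : ℝ => z + ε • d) (nhdsWithin 0 (Set.Ioi 0)) (nhds z) := by
    have h0 : z + (0:ℝ) • d = z := by simp
    have := (hcont.tendsto 0).mono_left (nhdsWithin_le_nhds (s := Set.Ioi (0:ℝ)))
    rwa [h0] at this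
  have hev : ∀ᶠ ε in nhdsWithin (0:ℝ) (Set.Ioi 0), z + ε • d ∈ t.set := by
    filter_upwards [Ioc_mem_nhdsGT_of_mem (by constructor <;> [rfl; exact hε₁] :
      (0:ℝ) ∈ Set.Ico 0 ε₁)] with ε hε
    exact h ε hε.1 hε.2
  exact t.isClosed_set.mem_of_tendsto htt hev

end Trap

lemma mem_hline_iff (c : ℝ) (z : ℝ × ℝ) :
    z ∈ lineSet ((0:ℝ), c) ((1:ℝ), c) ↔ z.2 = c := by
  constructor
  · rintro ⟨s, hs⟩; rw [hs]; simp
  · intro h; exact ⟨z.1, by rw [Prod.ext_iff]; constructor <;> simp [h]⟩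

lemma hlineP_ne (c : ℝ) : ((0:ℝ), c) ≠ ((1:ℝ), c) := by simp [Prod.ext_iff]

/-- affine comparison between endpoints -/
lemma aff_le_aff {p s p' s' a b y : ℝ} (hy1 : a ≤ y) (hy2 : y ≤ b)
    (ha : p + s*a ≤ p' + s'*a) (hb : p + s*b ≤ p' + s'*b) : p + s*y ≤ p' + s'*y := by
  rcases eq_or_lt_of_le (le_trans hy1 hy2) with heq | hab
  · have : y = a := le_antisymm (heq ▸ hy2) hy1
    rw [this]; exact ha
  · nlinarith [mul_nonneg (sub_nonneg.mpr hy2) (sub_nonneg.mpr ha),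
      mul_nonneg (sub_nonneg.mpr hy1) (sub_nonneg.mpr hb), sub_pos.mpr hab]

/-- an affine function nonneg on `[a,b]`, positive at an interior point, is positive at
every interior point -/
lemma aff_pos_interior {p s a b y0 y1 : ℝ} (ha : 0 ≤ p + s*a) (hb : 0 ≤ p + s*b)
    (hy0a : a < y0) (hy0b : y0 < b) (h0 : 0 < p + s*y0)
    (hy1a : a < y1) (hy1b : y1 < b) : 0 < p + s*y1 := by
  rcases lt_or_ge 0 (p + s*y1) with h | h
  · exact h
  · exfalso
    have h1 : 0 ≤ (b - y1) * (p + s*a) := mul_nonneg (by linarith) ha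
    have h2 : 0 ≤ (y1 - a) * (p + s*b) := mul_nonneg (by linarith) hb
    have hz : p + s * y1 = 0 := by nlinarith
    -- so the affine function vanishes at interior point y1 and is ≥ 0 at both ends
    rcases lt_trichotomy s 0 with hs | hs | hs
    · nlinarith
    · nlinarith
    · nlinarith

/-- one tile eventually contains the points `z + ε • d` -/
lemma exists_tile_dir {ι : Type} [Fintype ι] (tl : ι → Trap) (T : Trap)
    (hunion : (⋃ i, (tl i).set) = T.set) (z d : ℝ × ℝ) (ε₀ : ℝ) (hε₀ : 0 < ε₀)
    (hz : ∀ ε : ℝ, 0 < ε → ε ≤ ε₀ → z + ε • d ∈ T.set) :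
    ∃ k, z ∈ (tl k).set ∧ ∃ ε₁ : ℝ, 0 < ε₁ ∧ ∀ ε : ℝ, 0 < ε → ε ≤ ε₁ →
      z + ε • d ∈ (tl k).set := by
  have hne : Nonempty ι := by
    have h0 : ((T.l1, T.a) : ℝ × ℝ) ∈ ⋃ i, (tl i).set := by rw [hunion]; exact T.corner1_mem
    obtain ⟨_, ⟨⟨i, rfl⟩, _⟩⟩ := h0
    exact ⟨i⟩
  by_contra hcon
  push_neg at hcon
  -- for each k obtain an exclusion threshold
  have hstep : ∀ k : ι, ∃ η : ℝ, 0 < η ∧ ∀ ε : ℝ, 0 < ε → ε ≤ η → z + ε • d ∉ (tl k).set := by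
    intro k
    by_cases hsmall : ∀ η : ℝ, 0 < η → ∃ ε : ℝ, 0 < ε ∧ ε ≤ η ∧ z + ε • d ∈ (tl k).set
    · exfalso
      -- then the convex trace contains an initial interval
      obtain ⟨ε₂, hε₂0, hε₂1, hε₂mem⟩ := hsmall 1 one_pos
      have hJconv : Convex ℝ {ε : ℝ | z + ε • d ∈ (tl k).set} := by
        have := (tl k).convex.affine_preimage (AffineMap.lineMap z (z + d))
        have heq : {ε : ℝ | z + ε • d ∈ (tl k).set}
            = (AffineMap.lineMap z (z + d)) ⁻¹' (tl k).set := by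
          ext ε
          simp only [Set.mem_setOf_eq, Set.mem_preimage, AffineMap.lineMap_apply]
          rw [show z + d -ᵥ z = d by simp, show ε • d +ᵥ z = z + ε • d by
            rw [vadd_eq_add]; abel]
        rw [heq]; exact this
      have hOrd := hJconv.ordConnected
      have hall : ∀ ε : ℝ, 0 < ε → ε ≤ ε₂ → z + ε • d ∈ (tl k).set := by
        intro ε hε0 hεle
        obtain ⟨ε', hε'0, hε'le, hε'mem⟩ := hsmall ε hε0
        exact hOrd.out hε'mem hε₂mem ⟨hε'le, hεle⟩
      have hzmem : z ∈ (tl k).set := Trap.mem_of_dir hε₂0 hall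
      obtain ⟨ε, h1, h2, h3⟩ := hcon k hzmem ε₂ hε₂0
      exact h3 (hall ε h1 h2)
    · push_neg at hsmall
      obtain ⟨η, hη0, hη⟩ := hsmall
      exact ⟨η, hη0, fun ε h1 h2 hmem => hη ε h1 h2 hmem⟩
  choose η hη0 hηex using hstep
  have huniv : (Finset.univ : Finset ι).Nonempty := Finset.univ_nonempty
  obtain ⟨m, hm0, hmle⟩ : ∃ m : ℝ, 0 < m ∧ ∀ k : ι, m ≤ η k := by
    refine ⟨Finset.univ.inf' huniv η, ?_, ?_⟩
    · rw [Finset.lt_inf'_iff]; intro k _; exact hη0 k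
    · intro k; exact Finset.inf'_le _ (Finset.mem_univ k)
  set ε := min ε₀ m with hεdef
  have hε : 0 < ε := lt_min hε₀ hm0
  have hmem : z + ε • d ∈ T.set := hz ε hε (min_le_left _ _)
  rw [← hunion] at hmem
  obtain ⟨_, ⟨⟨k, rfl⟩, hk⟩⟩ := hmem
  exact hηex k ε hε (le_trans (min_le_right _ _) (hmle k)) hk

/-! ### affine function helpers -/

def AffW (f : ℝ → ℝ) : Prop := ∀ y, f y = f 0 + y * (f 1 - f 0)

lemma Trap.L_affw (t : Trap) : AffW t.L := t.L_affine
lemma Trap.R_affw (t : Trap) : AffW t.R := t.R_affine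

lemma AffW.sub {f g : ℝ → ℝ} (hf : AffW f) (hg : AffW g) :
    AffW (fun y => f y - g y) := by
  intro y; simp only []; rw [hf y, hg y, hf 1, hg 1, hf 0, hg 0]; ring

lemma AffW.finsum {ι : Type*} (s : Finset ι) (f : ι → ℝ → ℝ) (h : ∀ i, AffW (f i)) :
    AffW (fun y => ∑ i ∈ s, f i y) := by
  intro y
  simp only []
  rw [Finset.sum_congr rfl (fun i _ => h i y), Finset.sum_add_distrib, ← Finset.mul_sum,
    Finset.sum_sub_distrib]

lemma AffW.nonneg_between {f : ℝ → ℝ} (hf : AffW f) {a b y : ℝ}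
    (ha : 0 ≤ f a) (hb : 0 ≤ f b) (h1 : a ≤ y) (h2 : y ≤ b) : 0 ≤ f y := by
  rw [hf a] at ha; rw [hf b] at hb; rw [hf y]
  rcases eq_or_lt_of_le (le_trans h1 h2) with heq | hab
  · have : y = a := le_antisymm (heq ▸ h2) h1
    rw [this]; linarith [ha]
  · nlinarith [mul_nonneg (sub_nonneg.mpr h2) ha, mul_nonneg (sub_nonneg.mpr h1) hb,
      sub_pos.mpr hab]

lemma AffW.pos_interior {f : ℝ → ℝ} (hf : AffW f) {a b y0 y1 : ℝ}
    (ha : 0 ≤ f a) (hb : 0 ≤ f b) (hy0a : a < y0) (hy0b : y0 < b) (h0 : 0 < f y0)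
    (hy1a : a < y1) (hy1b : y1 < b) : 0 < f y1 := by
  rw [hf a] at ha; rw [hf b] at hb; rw [hf y0] at h0; rw [hf y1]
  set p := f 0
  set sl := f 1 - f 0
  rcases lt_or_ge 0 (p + y1 * sl) with h | h
  · exact h
  · exfalso
    have hint1 : 0 ≤ (b - y1) * (p + a * sl) := mul_nonneg (by linarith) ha
    have hint2 : 0 ≤ (y1 - a) * (p + b * sl) := mul_nonneg (by linarith) hb
    have hz : p + y1 * sl = 0 := by nlinarith
    rcases lt_trichotomy sl 0 with hs | hs | hs
    · have hmul : (b - y1) * sl < 0 := mul_neg_of_pos_of_neg (by linarith) hs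
      nlinarith
    · rw [hs, mul_zero, add_zero] at hz
      rw [hs, mul_zero, add_zero] at h0
      linarith
    · have hmul : (y1 - a) * sl > 0 := mul_pos (by linarith) hs
      nlinarith

lemma AffW.eq_zero {f : ℝ → ℝ} (hf : AffW f) {y1 y2 : ℝ} (hne : y1 ≠ y2)
    (h1 : f y1 = 0) (h2 : f y2 = 0) (y : ℝ) : f y = 0 := by
  rw [hf y1] at h1; rw [hf y2] at h2; rw [hf y]
  have hsl : (f 1 - f 0) = 0 := by
    by_contra hs
    refine hne (mul_right_cancel₀ hs ?_)
    linarith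
  rw [hsl, mul_zero, add_zero] at h1 ⊢
  exact h1

lemma AffW.exists_root {f : ℝ → ℝ} (hf : AffW f) {y1 y2 : ℝ}
    (h1 : f y1 < 0) (h2 : 0 ≤ f y2) :
    ∃ y : ℝ, min y1 y2 ≤ y ∧ y ≤ max y1 y2 ∧ f y = 0 := by
  rw [hf y1] at h1; rw [hf y2] at h2
  set p := f 0
  set sl := f 1 - f 0
  have hne : (p + y2 * sl) - (p + y1 * sl) > 0 := by linarith
  set lam := (-(p + y1 * sl)) / ((p + y2 * sl) - (p + y1 * sl)) with hlam
  have hl0 : 0 < lam := div_pos (by linarith) hne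
  have hl1 : lam ≤ 1 := (div_le_one hne).mpr (by linarith)
  refine ⟨y1 + lam * (y2 - y1), ?_, ?_, ?_⟩
  · rcases le_total y1 y2 with h | h
    · rw [min_eq_left h]; nlinarith [mul_nonneg hl0.le (sub_nonneg.mpr h)]
    · rw [min_eq_right h]; nlinarith [mul_nonneg (sub_nonneg.mpr hl1) (sub_nonneg.mpr h)]
  · rcases le_total y1 y2 with h | h
    · rw [max_eq_right h]; nlinarith [mul_nonneg (sub_nonneg.mpr hl1) (sub_nonneg.mpr h)]
    · rw [max_eq_left h]; nlinarith [mul_nonneg hl0.le (sub_nonneg.mpr h)]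
  · rw [hf (y1 + lam * (y2 - y1))]
    have hcc : lam * ((p + y2 * sl) - (p + y1 * sl)) = -(p + y1 * sl) :=
      div_mul_cancel₀ _ (ne_of_gt hne)
    linear_combination hcc

namespace Trap

lemma frontier_eq (t : Trap) : frontier t.set = t.set \ t.istrict := by
  rw [frontier, t.isClosed_set.closure_eq, t.interior_eq]

/-- truncation of a trapezoid above level c -/
def trunc (t : Trap) (c : ℝ) (hc : c < t.b) : Trap where
  a := max t.a c
  b := t.b
  l1 := t.L (max t.a c)
  r1 := t.R (max t.a c)
  l2 := t.l2
  r2 := t.r2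
  hab := max_lt t.hab hc
  h1 := t.L_le_R (le_max_left _ _) (max_lt t.hab hc).le
  h2 := t.h2
  hnd := by
    rcases t.hnd with h | h
    · rcases le_or_gt c t.a with hca | hca
      · left; rw [max_eq_left hca, L_a, R_a]; exact h
      · left; rw [max_eq_right hca.le]; exact t.width_pos hca hc
    · right; exact h

lemma trunc_L (t : Trap) (c : ℝ) (hc : c < t.b) (y : ℝ) :
    (t.trunc c hc).L y = t.L y := by
  have h1 : (0:ℝ) < t.b - t.a := t.bsub_pos
  have h2 : (0:ℝ) < t.b - max t.a c := sub_pos.mpr (max_lt t.hab hc)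
  show (t.L (max t.a c) * (t.b - y) + t.l2 * (y - max t.a c)) / (t.b - max t.a c) = t.L y
  rw [Trap.L, Trap.L]
  field_simp
  ring

lemma trunc_R (t : Trap) (c : ℝ) (hc : c < t.b) (y : ℝ) :
    (t.trunc c hc).R y = t.R y := by
  have h1 : (0:ℝ) < t.b - t.a := t.bsub_pos
  have h2 : (0:ℝ) < t.b - max t.a c := sub_pos.mpr (max_lt t.hab hc)
  show (t.R (max t.a c) * (t.b - y) + t.r2 * (y - max t.a c)) / (t.b - max t.a c) = t.R y
  rw [Trap.R, Trap.R]
  field_simp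
  ring

lemma trunc_set (t : Trap) (c : ℝ) (hc : c < t.b) :
    (t.trunc c hc).set = t.set ∩ {z : ℝ × ℝ | c ≤ z.2} := by
  ext z
  show max t.a c ≤ z.2 ∧ z.2 ≤ t.b ∧ (t.trunc c hc).L z.2 ≤ z.1 ∧ z.1 ≤ (t.trunc c hc).R z.2 ↔ _
  rw [trunc_L, trunc_R, max_le_iff]
  constructor
  · rintro ⟨⟨h1, h2⟩, h3, h4, h5⟩; exact ⟨⟨h1, h3, h4, h5⟩, h2⟩
  · rintro ⟨⟨h1, h3, h4, h5⟩, h2⟩; exact ⟨⟨h1, h2⟩, h3, h4, h5⟩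

lemma trunc_istrict (t : Trap) (c : ℝ) (hc : c < t.b) :
    (t.trunc c hc).istrict = t.istrict ∩ {z : ℝ × ℝ | c < z.2} := by
  ext z
  show max t.a c < z.2 ∧ z.2 < t.b ∧ (t.trunc c hc).L z.2 < z.1 ∧ z.1 < (t.trunc c hc).R z.2 ↔ _
  rw [trunc_L, trunc_R, max_lt_iff]
  constructor
  · rintro ⟨⟨h1, h2⟩, h3, h4, h5⟩; exact ⟨⟨h1, h3, h4, h5⟩, h2⟩
  · rintro ⟨⟨h1, h3, h4, h5⟩, h2⟩; exact ⟨⟨h1, h2⟩, h3, h4, h5⟩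

end Trap

section Tiling

variable {ι : Type} [Fintype ι] {tl : ι → Trap} {T : Trap}

lemma tile_sub (hunion : (⋃ i, (tl i).set) = T.set) (i : ι) : (tl i).set ⊆ T.set := by
  rw [← hunion]; exact Set.subset_iUnion (fun i => (tl i).set) i

lemma sub_ab {u : Trap} (hsub : u.set ⊆ T.set) : T.a ≤ u.a ∧ u.b ≤ T.b :=
  ⟨(hsub u.corner1_mem).1, (hsub u.corner3_mem).2.1⟩

lemma sub_L {u : Trap} (hsub : u.set ⊆ T.set) {y : ℝ} (h1 : u.a ≤ y) (h2 : y ≤ u.b) :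
    T.L y ≤ u.L y := by
  have c1 := hsub u.corner1_mem
  have c3 := hsub u.corner3_mem
  have ha' : 0 ≤ u.L u.a - T.L u.a := by rw [u.L_a]; linarith [c1.2.2.1]
  have hb' : 0 ≤ u.L u.b - T.L u.b := by rw [u.L_b]; linarith [c3.2.2.1]
  have := (AffW.sub u.L_affw T.L_affw).nonneg_between ha' hb' h1 h2
  simpa using this

lemma sub_R {u : Trap} (hsub : u.set ⊆ T.set) {y : ℝ} (h1 : u.a ≤ y) (h2 : y ≤ u.b) :
    u.R y ≤ T.R y := by
  have c2 := hsub u.corner2_mem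
  have c4 := hsub u.corner4_mem
  have ha' : 0 ≤ T.R u.a - u.R u.a := by rw [u.R_a]; linarith [c2.2.2.2]
  have hb' : 0 ≤ T.R u.b - u.R u.b := by rw [u.R_b]; linarith [c4.2.2.2]
  have := (AffW.sub T.R_affw u.R_affw).nonneg_between ha' hb' h1 h2
  simpa using this

lemma not_mem_two (hdisj : ∀ i j, i ≠ j → (tl i).istrict ∩ (tl j).istrict = ∅)
    {i k : ι} {z : ℝ × ℝ} (hz : z ∈ (tl i).set) (hzk : z ∈ (tl k).istrict) : i = k := by
  by_contra hik
  obtain ⟨w, hw1, hw2⟩ := (tl i).mem_closure_interior hz ((tl k).istrict)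
    (tl k).istrict_open hzk
  have : w ∈ (tl i).istrict ∩ (tl k).istrict := ⟨hw2, hw1⟩
  rw [hdisj i k hik] at this
  exact this

open MeasureTheory in
lemma slice_sum (hdisj : ∀ i j, i ≠ j → (tl i).istrict ∩ (tl j).istrict = ∅)
    (hunion : (⋃ i, (tl i).set) = T.set) {y : ℝ} (hy1 : T.a < y) (hy2 : y < T.b)
    (hnl : ∀ i, y ≠ (tl i).a ∧ y ≠ (tl i).b) :
    ∑ i ∈ Finset.univ.filter (fun i => (tl i).a < y ∧ y < (tl i).b),
      ((tl i).R y - (tl i).L y) = T.R y - T.L y := by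
  classical
  set Cr := Finset.univ.filter (fun i => (tl i).a < y ∧ y < (tl i).b) with hCr
  have hmemCr : ∀ i ∈ Cr, (tl i).a < y ∧ y < (tl i).b := by
    intro i hi; rw [hCr, Finset.mem_filter] at hi; exact hi.2
  have hWnn : ∀ i ∈ Cr, 0 ≤ (tl i).R y - (tl i).L y := by
    intro i hi
    have h := hmemCr i hi
    linarith [(tl i).width_pos h.1 h.2]
  have hTnn : (0:ℝ) ≤ T.R y - T.L y := by linarith [T.L_le_R hy1.le hy2.le]
  -- upper bound : disjointness
  have hle : ∑ i ∈ Cr, ((tl i).R y - (tl i).L y) ≤ T.R y - T.L y := by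
    have hpd : (Cr : Set ι).PairwiseDisjoint
        (fun i => Set.Ioo ((tl i).L y) ((tl i).R y)) := by
      intro i hi j hj hij
      have hi' : i ∈ Cr := hi
      have hj' : j ∈ Cr := hj
      show Disjoint (Set.Ioo ((tl i).L y) ((tl i).R y)) (Set.Ioo ((tl j).L y) ((tl j).R y))
      rw [Set.disjoint_left]
      intro x hxi hxj
      have hzi : ((x, y) : ℝ × ℝ) ∈ (tl i).istrict :=
        ⟨(hmemCr i hi').1, (hmemCr i hi').2, hxi.1, hxi.2⟩
      have hzj : ((x, y) : ℝ × ℝ) ∈ (tl j).istrict :=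
        ⟨(hmemCr j hj').1, (hmemCr j hj').2, hxj.1, hxj.2⟩
      have : ((x, y) : ℝ × ℝ) ∈ (tl i).istrict ∩ (tl j).istrict := ⟨hzi, hzj⟩
      rw [hdisj i j hij] at this
      exact this
    have hm : ∀ i ∈ Cr, MeasurableSet (Set.Ioo ((tl i).L y) ((tl i).R y)) :=
      fun i _ => measurableSet_Ioo
    have hvol := measure_biUnion_finset hpd hm (μ := volume)
    have hsub : (⋃ i ∈ Cr, Set.Ioo ((tl i).L y) ((tl i).R y)) ⊆
        Set.Icc (T.L y) (T.R y) := by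
      intro x hx
      simp only [Set.mem_iUnion] at hx
      obtain ⟨i, hi, hxi⟩ := hx
      have h := hmemCr i hi
      have hs := tile_sub hunion i
      constructor
      · linarith [sub_L hs h.1.le h.2.le, hxi.1]
      · linarith [sub_R hs h.1.le h.2.le, hxi.2]
    have hmono := measure_mono (μ := volume) hsub
    rw [hvol] at hmono
    rw [Real.volume_Icc] at hmono
    have hsum : ∑ i ∈ Cr, volume (Set.Ioo ((tl i).L y) ((tl i).R y))
        = ENNReal.ofReal (∑ i ∈ Cr, ((tl i).R y - (tl i).L y)) := by
      rw [ENNReal.ofReal_sum_of_nonneg hWnn]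
      exact Finset.sum_congr rfl (fun i _ => Real.volume_Ioo)
    rw [hsum] at hmono
    exact (ENNReal.ofReal_le_ofReal_iff hTnn).mp hmono
  -- lower bound : covering
  have hge : T.R y - T.L y ≤ ∑ i ∈ Cr, ((tl i).R y - (tl i).L y) := by
    have hsub : Set.Icc (T.L y) (T.R y) ⊆
        ⋃ i ∈ Cr, Set.Icc ((tl i).L y) ((tl i).R y) := by
      intro x hx
      have hzT : ((x, y) : ℝ × ℝ) ∈ T.set := ⟨hy1.le, hy2.le, hx.1, hx.2⟩
      rw [← hunion] at hzT
      obtain ⟨_, ⟨⟨i, rfl⟩, hzi⟩⟩ := hzT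
      have h1 : (tl i).a < y := lt_of_le_of_ne hzi.1 (Ne.symm (hnl i).1)
      have h2 : y < (tl i).b := lt_of_le_of_ne hzi.2.1 ((hnl i).2)
      simp only [Set.mem_iUnion]
      exact ⟨i, by rw [hCr, Finset.mem_filter]; exact ⟨Finset.mem_univ i, h1, h2⟩,
        hzi.2.2.1, hzi.2.2.2⟩
    have hmono := measure_mono (μ := volume) hsub
    have hble := measure_biUnion_finset_le (μ := volume) Cr
      (fun i => Set.Icc ((tl i).L y) ((tl i).R y))
    have htrans := le_trans hmono hble
    rw [Real.volume_Icc] at htrans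
    have hsum : ∑ i ∈ Cr, volume (Set.Icc ((tl i).L y) ((tl i).R y))
        = ENNReal.ofReal (∑ i ∈ Cr, ((tl i).R y - (tl i).L y)) := by
      rw [ENNReal.ofReal_sum_of_nonneg hWnn]
      exact Finset.sum_congr rfl (fun i _ => Real.volume_Icc)
    rw [hsum] at htrans
    exact (ENNReal.ofReal_le_ofReal_iff (Finset.sum_nonneg hWnn)).mp htrans
  linarith

/-- if `c` is the minimal level above `T.a` and `c < T.b`, some tile has top exactly `c` -/
lemma dying_exists (hdisj : ∀ i j, i ≠ j → (tl i).istrict ∩ (tl j).istrict = ∅)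
    (hunion : (⋃ i, (tl i).set) = T.set) {c : ℝ}
    (hcA : T.a < c) (hcB : c < T.b)
    (hlev : ∀ i, ((tl i).a = T.a ∨ c ≤ (tl i).a) ∧ c ≤ (tl i).b)
    (hcmem : ∃ j, (tl j).a = c ∨ (tl j).b = c) :
    ∃ j, (tl j).b = c := by
  classical
  by_contra hno
  push_neg at hno
  have hbgt : ∀ i, c < (tl i).b := fun i => lt_of_le_of_ne (hlev i).2 (Ne.symm (hno i))
  obtain ⟨j0, hj0⟩ := hcmem
  have hj0a : (tl j0).a = c := by
    rcases hj0 with h | h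
    · exact h
    · exact absurd h (hno j0)
  -- the next level above c
  set F := ((Finset.univ.image fun i => (tl i).a) ∪
    (Finset.univ.image fun i => (tl i).b)).filter (fun x => c < x) with hF
  have hFne : F.Nonempty := by
    refine ⟨(tl j0).b, ?_⟩
    rw [hF, Finset.mem_filter, Finset.mem_union]
    exact ⟨Or.inr (Finset.mem_image_of_mem _ (Finset.mem_univ j0)), hbgt j0⟩
  set c2 := F.min' hFne with hc2
  have hc2F : c2 ∈ F := F.min'_mem hFne
  have hcc2 : c < c2 := by
    rw [hF] at hc2F
    exact (Finset.mem_filter.mp hc2F).2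
  have hc2b : ∀ i, c2 ≤ (tl i).b := by
    intro i
    apply F.min'_le
    rw [hF, Finset.mem_filter, Finset.mem_union]
    exact ⟨Or.inr (Finset.mem_image_of_mem _ (Finset.mem_univ i)), hbgt i⟩
  have hc2a : ∀ i, c < (tl i).a → c2 ≤ (tl i).a := by
    intro i hi
    apply F.min'_le
    rw [hF, Finset.mem_filter, Finset.mem_union]
    exact ⟨Or.inl (Finset.mem_image_of_mem _ (Finset.mem_univ i)), hi⟩
  have hc2Tb : c2 ≤ T.b := le_trans (hc2b j0) (sub_ab (hsub := tile_sub hunion j0)).2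
  -- sample points
  set y1 := T.a + (c - T.a)/3 with hy1def
  set y2 := T.a + (c - T.a)*2/3 with hy2def
  set y3 := (c + c2)/2 with hy3def
  have hy1A : T.a < y1 := by rw [hy1def]; linarith
  have hy1c : y1 < c := by rw [hy1def]; linarith
  have hy2A : T.a < y2 := by rw [hy2def]; linarith
  have hy2c : y2 < c := by rw [hy2def]; linarith
  have hy12 : y1 ≠ y2 := by rw [hy1def, hy2def]; intro h; nlinarith
  have hy3c : c < y3 := by rw [hy3def]; linarith
  have hy3c2 : y3 < c2 := by rw [hy3def]; linarith
  have hy3B : y3 < T.b := lt_of_lt_of_le hy3c2 hc2Tb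
  -- crossing sets in the bottom strip
  have hCrlow : ∀ y : ℝ, T.a < y → y < c →
      Finset.univ.filter (fun i => (tl i).a < y ∧ y < (tl i).b)
      = Finset.univ.filter (fun i => (tl i).a < c) := by
    intro y hA hc'
    ext i
    simp only [Finset.mem_filter, Finset.mem_univ, true_and]
    constructor
    · rintro ⟨h1, _⟩; linarith
    · intro h1
      have ha : (tl i).a = T.a := by
        rcases (hlev i).1 with h | h
        · exact h
        · linarith
      exact ⟨by linarith [ha ▸ hA], by linarith [hbgt i]⟩
  have hCrhigh : Finset.univ.filter (fun i => (tl i).a < y3 ∧ y3 < (tl i).b)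
      = Finset.univ.filter (fun i => (tl i).a ≤ c) := by
    ext i
    simp only [Finset.mem_filter, Finset.mem_univ, true_and]
    constructor
    · rintro ⟨h1, _⟩
      by_contra h
      push_neg at h
      linarith [hc2a i h]
    · intro h1
      exact ⟨by linarith, by linarith [hc2b i]⟩
  -- no level inside (T.a, c) or (c, c2)
  have hnl_low : ∀ y : ℝ, T.a < y → y < c → ∀ i, y ≠ (tl i).a ∧ y ≠ (tl i).b := by
    intro y hA hc' i
    constructor
    · rcases (hlev i).1 with h | h
      · rw [h]; exact ne_of_gt hA
      · intro he; rw [he] at hc'; linarith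
    · intro he; rw [he] at hc'; linarith [(hlev i).2]
  have hnl_high : ∀ i, y3 ≠ (tl i).a ∧ y3 ≠ (tl i).b := by
    intro i
    constructor
    · rcases (hlev i).1 with h | h
      · rw [h]; exact ne_of_gt (by linarith)
      · rcases eq_or_lt_of_le h with he | hlt
        · rw [← he]; exact ne_of_gt hy3c
        · intro he; rw [he] at hy3c2; linarith [hc2a i hlt]
    · intro he; rw [he] at hy3c2; linarith [hc2b i]
  -- the affine identity on the bottom strip extends to y3
  set G := fun y : ℝ => (∑ i ∈ Finset.univ.filter (fun i => (tl i).a < c),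
    ((tl i).R y - (tl i).L y)) - (T.R y - T.L y) with hG
  have hGaff : AffW G := by
    apply AffW.sub
    · exact AffW.finsum _ _ (fun i => AffW.sub (tl i).R_affw (tl i).L_affw)
    · exact AffW.sub T.R_affw T.L_affw
  have hG1 : G y1 = 0 := by
    rw [hG]
    have := slice_sum hdisj hunion hy1A (by linarith : y1 < T.b) (hnl_low y1 hy1A hy1c)
    rw [hCrlow y1 hy1A hy1c] at this
    simp only []
    linarith
  have hG2 : G y2 = 0 := by
    rw [hG]
    have := slice_sum hdisj hunion hy2A (by linarith : y2 < T.b) (hnl_low y2 hy2A hy2c)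
    rw [hCrlow y2 hy2A hy2c] at this
    simp only []
    linarith
  have hG3 : G y3 = 0 := hGaff.eq_zero hy12 hG1 hG2 y3
  -- slice identity at y3
  have hs3 := slice_sum hdisj hunion (by linarith : T.a < y3) hy3B hnl_high
  rw [hCrhigh] at hs3
  -- split the sum
  have hsplit : Finset.univ.filter (fun i => (tl i).a ≤ c)
      = (Finset.univ.filter (fun i => (tl i).a < c)) ∪
        (Finset.univ.filter (fun i => (tl i).a = c)) := by
    ext i
    simp only [Finset.mem_union, Finset.mem_filter, Finset.mem_univ, true_and]
    constructor
    · intro h; rcases lt_or_eq_of_le h with h | h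
      · exact Or.inl h
      · exact Or.inr h
    · rintro (h | h) <;> [exact h.le; exact h.le]
  have hdisj' : Disjoint (Finset.univ.filter (fun i => (tl i).a < c))
      (Finset.univ.filter (fun i => (tl i).a = c)) := by
    rw [Finset.disjoint_left]
    intro i h1 h2
    rw [Finset.mem_filter] at h1 h2
    linarith [h2.2 ▸ h1.2]
  rw [hsplit, Finset.sum_union hdisj'] at hs3
  have hG3' : (∑ i ∈ Finset.univ.filter (fun i => (tl i).a < c),
      ((tl i).R y3 - (tl i).L y3)) - (T.R y3 - T.L y3) = 0 := hG3
  have hJ0 : ∑ i ∈ Finset.univ.filter (fun i => (tl i).a = c),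
      ((tl i).R y3 - (tl i).L y3) = 0 := by linarith
  -- but the term for j0 is positive
  have hj0mem : j0 ∈ Finset.univ.filter (fun i => (tl i).a = c) := by
    rw [Finset.mem_filter]; exact ⟨Finset.mem_univ _, hj0a⟩
  have hterm : ∀ i ∈ Finset.univ.filter (fun i => (tl i).a = c),
      0 ≤ (tl i).R y3 - (tl i).L y3 := by
    intro i hi
    rw [Finset.mem_filter] at hi
    have h1 : (tl i).a ≤ y3 := by rw [hi.2]; linarith
    have h2 : y3 ≤ (tl i).b := by linarith [hc2b i]
    linarith [(tl i).L_le_R h1 h2]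
  have hzero := (Finset.sum_eq_zero_iff_of_nonneg hterm).mp hJ0 j0 hj0mem
  have hpos : 0 < (tl j0).R y3 - (tl j0).L y3 := by
    have h1 : (tl j0).a < y3 := by rw [hj0a]; linarith
    have h2 : y3 < (tl j0).b := by linarith [hc2b j0]
    linarith [(tl j0).width_pos h1 h2]
  linarith

end Tiling


lemma AffW.graph_line {g : ℝ → ℝ} (hg : AffW g) {u v z : ℝ × ℝ}
    (hu : u.1 = g u.2) (hv : v.1 = g v.2) (hz : z.1 = g z.2) (hne : u.2 ≠ v.2) :
    z ∈ lineSet u v := by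
  refine ⟨(z.2 - u.2)/(v.2 - u.2), ?_⟩
  have hden : v.2 - u.2 ≠ 0 := sub_ne_zero.mpr (Ne.symm hne)
  have hmul : (z.2 - u.2)/(v.2 - u.2) * (v.2 - u.2) = z.2 - u.2 := div_mul_cancel₀ _ hden
  rw [Prod.ext_iff]
  constructor
  · show z.1 = u.1 + (z.2 - u.2)/(v.2 - u.2) * (v.1 - u.1)
    rw [hu, hv, hz, hg u.2, hg v.2, hg z.2]
    linear_combination (g 0 - g 1) * hmul
  · show z.2 = u.2 + (z.2 - u.2)/(v.2 - u.2) * (v.2 - u.2)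
    rw [hmul]; ring

lemma reuse_line {s' : Finset ((ℝ × ℝ) × (ℝ × ℝ))} {E : Set (ℝ × ℝ)}
    (hcov : E ⊆ ⋃ e ∈ s', lineSet e.1 e.2) {g : ℝ → ℝ} (hg : AffW g) {c εr : ℝ}
    (hεr : 0 < εr)
    (hw : ∀ ε : ℝ, 0 < ε → ε ≤ εr → ((g (c+ε), c+ε) : ℝ × ℝ) ∈ E)
    {z : ℝ × ℝ} (hz : z.1 = g z.2) : ∃ e ∈ s', z ∈ lineSet e.1 e.2 := by
  classical
  have hεm : ∀ m : ℕ, 0 < εr/((m:ℝ)+2) ∧ εr/((m:ℝ)+2) ≤ εr := by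
    intro m
    have h2 : (0:ℝ) < (m:ℝ)+2 := by positivity
    constructor
    · positivity
    · rw [div_le_iff₀ h2]; nlinarith [Nat.cast_nonneg (α := ℝ) m]
  have hm : ∀ m : ℕ, ∃ e ∈ s',
      ((g (c + εr/((m:ℝ)+2)), c + εr/((m:ℝ)+2)) : ℝ × ℝ) ∈ lineSet e.1 e.2 := by
    intro m
    have := hcov (hw _ (hεm m).1 (hεm m).2)
    simpa using this
  choose f hf1 hf2 using hm
  obtain ⟨m, m', hmm, hff⟩ := Finite.exists_ne_map_eq_of_infinite
    (fun m : ℕ => (⟨f m, hf1 m⟩ : {e // e ∈ s'}))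
  have hfeq : f m = f m' := congrArg Subtype.val hff
  set u : ℝ × ℝ := (g (c + εr/((m:ℝ)+2)), c + εr/((m:ℝ)+2)) with hu
  set v : ℝ × ℝ := (g (c + εr/((m':ℝ)+2)), c + εr/((m':ℝ)+2)) with hv
  have huv2 : u.2 ≠ v.2 := by
    show c + εr/((m:ℝ)+2) ≠ c + εr/((m':ℝ)+2)
    intro h
    have h1 : εr/((m:ℝ)+2) = εr/((m':ℝ)+2) := by linarith
    have h2 : (0:ℝ) < (m:ℝ)+2 := by positivity
    have h3 : (0:ℝ) < (m':ℝ)+2 := by positivity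
    rw [div_eq_div_iff h2.ne' h3.ne'] at h1
    have hεr' : εr ≠ 0 := ne_of_gt hεr
    have h4 := mul_left_cancel₀ hεr' h1
    have h5 : (m:ℝ) = (m':ℝ) := by linarith
    exact hmm (Nat.cast_injective h5)
  have huv : u ≠ v := fun h => huv2 (congrArg Prod.snd h)
  refine ⟨f m, hf1 m, ?_⟩
  apply lineSet_trans (hf2 m) (hfeq ▸ hf2 m') huv
  exact hg.graph_line rfl rfl hz huv2

lemma Trap.edge_cases {t : Trap} {z : ℝ × ℝ} (hz : z ∈ t.set) (hni : z ∉ t.istrict)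
    (h1 : t.a < z.2) (h2 : z.2 < t.b) : z.1 = t.L z.2 ∨ z.1 = t.R z.2 := by
  by_contra hcon
  push_neg at hcon
  exact hni ⟨h1, h2, lt_of_le_of_ne hz.2.2.1 (Ne.symm hcon.1), lt_of_le_of_ne hz.2.2.2 hcon.2⟩

lemma AffW.add {f g : ℝ → ℝ} (hf : AffW f) (hg : AffW g) :
    AffW (fun y => f y + g y) := by
  intro y; simp only []; rw [hf y, hg y, hf 1, hg 1, hf 0, hg 0]; ring

section Tiling2

variable {ι : Type} [Fintype ι] {tl : ι → Trap} {T : Trap}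

lemma flush_exists (hunion : (⋃ i, (tl i).set) = T.set) {y : ℝ}
    (hyA : T.a ≤ y) (hyB : y ≤ T.b) :
    ∃ k, (tl k).a ≤ y ∧ y ≤ (tl k).b ∧ (tl k).L y = T.L y := by
  have hpt : ((T.L y, y) : ℝ × ℝ) ∈ T.set :=
    ⟨hyA, hyB, le_refl _, T.L_le_R hyA hyB⟩
  rw [← hunion] at hpt
  obtain ⟨_, ⟨⟨k, rfl⟩, hk⟩⟩ := hpt
  refine ⟨k, hk.1, hk.2.1, ?_⟩
  exact le_antisymm hk.2.2.1 (sub_L (tile_sub hunion k) hk.1 hk.2.1)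

lemma right_neighbor (hunion : (⋃ i, (tl i).set) = T.set) {z : ℝ × ℝ}
    (hzT : z ∈ T.istrict) :
    ∃ k, z ∈ (tl k).set ∧ z.1 < (tl k).R z.2 := by
  have hco : ∀ ε : ℝ, z + ε • ((1:ℝ), (0:ℝ)) = (z.1 + ε, z.2) := by
    intro ε; rw [Prod.ext_iff]; constructor <;> simp
  obtain ⟨hz1, hz2, hz3, hz4⟩ := hzT
  have hz' : ∀ ε : ℝ, 0 < ε → ε ≤ T.R z.2 - z.1 → z + ε • ((1:ℝ), (0:ℝ)) ∈ T.set := by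
    intro ε h1 h2
    rw [hco]
    exact ⟨hz1.le, hz2.le, by simp; linarith, by simp; linarith⟩
  obtain ⟨k, hzk, ε₁, hε₁, hk⟩ := exists_tile_dir tl T hunion z ((1:ℝ), (0:ℝ))
    (T.R z.2 - z.1) (by linarith) hz'
  refine ⟨k, hzk, ?_⟩
  have := hk ε₁ hε₁ (le_refl _)
  rw [hco] at this
  have h4 := this.2.2.2
  simp at h4
  linarith

lemma left_neighbor (hunion : (⋃ i, (tl i).set) = T.set) {z : ℝ × ℝ}
    (hzT : z ∈ T.istrict) :
    ∃ k, z ∈ (tl k).set ∧ (tl k).L z.2 < z.1 := by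
  have hco : ∀ ε : ℝ, z + ε • ((-1:ℝ), (0:ℝ)) = (z.1 - ε, z.2) := by
    intro ε; rw [Prod.ext_iff]; constructor <;> simp <;> ring
  obtain ⟨hz1, hz2, hz3, hz4⟩ := hzT
  have hz' : ∀ ε : ℝ, 0 < ε → ε ≤ z.1 - T.L z.2 → z + ε • ((-1:ℝ), (0:ℝ)) ∈ T.set := by
    intro ε h1 h2
    rw [hco]
    exact ⟨hz1.le, hz2.le, by simp; linarith, by simp; linarith⟩
  obtain ⟨k, hzk, ε₁, hε₁, hk⟩ := exists_tile_dir tl T hunion z ((-1:ℝ), (0:ℝ))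
    (z.1 - T.L z.2) (by linarith) hz'
  refine ⟨k, hzk, ?_⟩
  have := hk ε₁ hε₁ (le_refl _)
  rw [hco] at this
  have h3 := this.2.2.1
  simp at h3
  linarith

end Tiling2

lemma main_cover (N : ℕ) : ∀ (ι : Type) [Fintype ι] (T : Trap) (tl : ι → Trap),
    Fintype.card ι ≤ N →
    (∀ i j, i ≠ j → (tl i).istrict ∩ (tl j).istrict = ∅) →
    (⋃ i, (tl i).set) = T.set →
    ∃ s : Finset ((ℝ × ℝ) × (ℝ × ℝ)),
      s.card + 1 ≤ Fintype.card ι ∧ (∀ e ∈ s, e.1 ≠ e.2) ∧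
      (T.istrict ∩ ⋃ i, ((tl i).set \ (tl i).istrict)) ⊆ ⋃ e ∈ s, lineSet e.1 e.2 := by
  induction N with
  | zero =>
    intro ι inst T tl hcard hdisj hunion
    exfalso
    have h0 : Fintype.card ι = 0 := Nat.le_zero.mp hcard
    have hpt : ((T.l1, T.a) : ℝ × ℝ) ∈ ⋃ i, (tl i).set := by
      rw [hunion]; exact T.corner1_mem
    obtain ⟨_, ⟨⟨i, rfl⟩, _⟩⟩ := hpt
    exact (Fintype.card_eq_zero_iff.mp h0).false i
  | succ N IH =>
    intro ι inst T tl hcard hdisj hunion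
    classical
    have hne : Nonempty ι := by
      have hpt : ((T.l1, T.a) : ℝ × ℝ) ∈ ⋃ i, (tl i).set := by
        rw [hunion]; exact T.corner1_mem
      obtain ⟨_, ⟨⟨i, rfl⟩, _⟩⟩ := hpt
      exact ⟨i⟩
    obtain ⟨i00⟩ := hne
    have hsub : ∀ i, (tl i).set ⊆ T.set := tile_sub hunion
    have hab : ∀ i, T.a ≤ (tl i).a ∧ (tl i).b ≤ T.b := fun i => sub_ab (hsub i)
    -- the lowest level above T.a
    set Lev := ((Finset.univ.image fun i => (tl i).a) ∪
      (Finset.univ.image fun i => (tl i).b)).filter (fun x => T.a < x) with hLev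
    have hLevne : Lev.Nonempty := by
      refine ⟨(tl i00).b, ?_⟩
      rw [hLev, Finset.mem_filter, Finset.mem_union]
      exact ⟨Or.inr (Finset.mem_image_of_mem _ (Finset.mem_univ i00)),
        lt_of_le_of_lt (hab i00).1 (tl i00).hab⟩
    set c := Lev.min' hLevne with hcdef
    have hcLev : c ∈ Lev := Lev.min'_mem hLevne
    have hcA : T.a < c := by
      rw [hLev] at hcLev; exact (Finset.mem_filter.mp hcLev).2
    have hcblev : ∀ i, c ≤ (tl i).b := by
      intro i
      apply Lev.min'_le
      rw [hLev, Finset.mem_filter, Finset.mem_union]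
      exact ⟨Or.inr (Finset.mem_image_of_mem _ (Finset.mem_univ i)),
        lt_of_le_of_lt (hab i).1 (tl i).hab⟩
    have halev : ∀ i, (tl i).a = T.a ∨ c ≤ (tl i).a := by
      intro i
      rcases eq_or_lt_of_le (hab i).1 with h | h
      · exact Or.inl h.symm
      · right
        apply Lev.min'_le
        rw [hLev, Finset.mem_filter, Finset.mem_union]
        exact ⟨Or.inl (Finset.mem_image_of_mem _ (Finset.mem_univ i)), h⟩
    have hcmem : ∃ j, (tl j).a = c ∨ (tl j).b = c := by
      rw [hLev] at hcLev
      have := (Finset.mem_filter.mp hcLev).1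
      rw [Finset.mem_union] at this
      rcases this with h | h <;> rw [Finset.mem_image] at h <;>
        obtain ⟨j, _, hj⟩ := h
      · exact ⟨j, Or.inl hj⟩
      · exact ⟨j, Or.inr hj⟩
    have hcTb : c ≤ T.b := le_trans (hcblev i00) (hab i00).2
    -- helper : tiles touching points strictly below c start at the bottom
    have hht : ∀ (k : ι) (z : ℝ × ℝ), z ∈ (tl k).set → z ∈ T.istrict → z.2 < c →
        (tl k).a = T.a ∧ (tl k).a < z.2 ∧ z.2 < (tl k).b := by
      intro k z hk hzT hzc
      have h1 : (tl k).a ≤ z.2 := hk.1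
      have ha : (tl k).a = T.a := by
        rcases halev k with h | h
        · exact h
        · linarith
      exact ⟨ha, by rw [ha]; exact hzT.1, by linarith [hcblev k]⟩
    rcases eq_or_lt_of_le hcTb with hbase | hstep
    · -- BASE CASE : c = T.b, all tiles span the full height
      have hspan : ∀ i, (tl i).a = T.a ∧ (tl i).b = T.b := by
        intro i
        constructor
        · rcases halev i with h | h
          · exact h
          · exfalso; linarith [(tl i).hab, (hab i).2, hbase ▸ h]
        · exact le_antisymm (hab i).2 (hbase ▸ hcblev i)
      set ym := (T.a + T.b)/2 with hymdef
      have hymA : T.a < ym := by rw [hymdef]; linarith [T.hab]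
      have hymB : ym < T.b := by rw [hymdef]; linarith [T.hab]
      obtain ⟨kf, _, _, hkf⟩ := flush_exists hunion hymA.le hymB.le
      set Dne := Finset.univ.filter (fun i => (tl i).L ym ≠ T.L ym) with hDne
      refine ⟨Dne.image (fun i => ((tl i).leftP, (tl i).leftQ)), ?_, ?_, ?_⟩
      · have h1 : (Dne.image (fun i => ((tl i).leftP, (tl i).leftQ))).card ≤ Dne.card :=
          Finset.card_image_le
        have h2 : Dne.card < Fintype.card ι := by
          rw [← Finset.card_univ]
          apply Finset.card_lt_card
          rw [Finset.ssubset_iff_of_subset (Finset.subset_univ _)]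
          refine ⟨kf, Finset.mem_univ _, ?_⟩
          rw [hDne, Finset.mem_filter]
          push_neg
          exact fun _ => hkf
        omega
      · intro e he
        rw [Finset.mem_image] at he
        obtain ⟨i, _, rfl⟩ := he
        exact (tl i).leftP_ne
      · intro z hz
        obtain ⟨hzT, hzi⟩ := hz
        rw [Set.mem_iUnion] at hzi
        obtain ⟨i, hzi, hni⟩ := hzi
        have hnall : ∀ k : ι, z ∉ (tl k).istrict := by
          intro k hk
          exact hni (by rw [not_mem_two hdisj hzi hk]; exact hk)
        -- find k with z.1 = L_k z.2, z ∈ set k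
        have hkey : ∃ k, z ∈ (tl k).set ∧ z.1 = (tl k).L z.2 := by
          have hhts : ∀ k, z ∈ (tl k).set → (tl k).a < z.2 ∧ z.2 < (tl k).b := by
            intro k _
            rw [(hspan k).1, (hspan k).2]
            exact ⟨hzT.1, hzT.2.1⟩
          rcases (tl i).edge_cases hzi (hnall i) (hhts i hzi).1 (hhts i hzi).2 with hL | hR
          · exact ⟨i, hzi, hL⟩
          · obtain ⟨k, hzk, hkR⟩ := right_neighbor hunion hzT
            rcases (tl k).edge_cases hzk (hnall k) (hhts k hzk).1 (hhts k hzk).2 with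
              hL | hR'
            · exact ⟨k, hzk, hL⟩
            · exfalso; rw [hR'] at hkR; exact lt_irrefl _ hkR
        obtain ⟨k, hzk, hzL⟩ := hkey
        -- k is non-flush
        have hkne : (tl k).L ym ≠ T.L ym := by
          have hf : AffW (fun y => (tl k).L y - T.L y) := AffW.sub (tl k).L_affw T.L_affw
          have hga : 0 ≤ (tl k).L (tl k).a - T.L (tl k).a :=
            sub_nonneg.mpr (sub_L (hsub k) (le_refl _) (tl k).hab.le)
          have hgb : 0 ≤ (tl k).L (tl k).b - T.L (tl k).b :=
            sub_nonneg.mpr (sub_L (hsub k) (tl k).hab.le (le_refl _))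
          have h0 : 0 < (tl k).L z.2 - T.L z.2 := by rw [← hzL]; linarith [hzT.2.2.1]
          have hin : (tl k).a < z.2 ∧ z.2 < (tl k).b := by
            rw [(hspan k).1, (hspan k).2]; exact ⟨hzT.1, hzT.2.1⟩
          have hym : (tl k).a < ym ∧ ym < (tl k).b := by
            rw [(hspan k).1, (hspan k).2]; exact ⟨hymA, hymB⟩
          have := hf.pos_interior hga hgb hin.1 hin.2 h0 hym.1 hym.2
          intro h
          rw [h] at this
          simp at this
        rw [Set.mem_iUnion₂]
        refine ⟨((tl k).leftP, (tl k).leftQ), ?_, ?_⟩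
        · rw [Finset.mem_image]
          exact ⟨k, by rw [hDne, Finset.mem_filter]; exact ⟨Finset.mem_univ _, hkne⟩, rfl⟩
        · rw [(tl k).mem_leftLine_iff]; exact hzL
    · -- STEP CASE : c < T.b
      obtain ⟨jd, hjd⟩ := dying_exists hdisj hunion hcA hstep
        (fun i => ⟨halev i, hcblev i⟩) hcmem
      set T' := T.trunc c hstep with hT'def
      set tl' : {i : ι // c < (tl i).b} → Trap :=
        (fun i => (tl i.1).trunc c i.2) with htl'def
      have htl'set : ∀ i : {i : ι // c < (tl i).b},
          (tl' i).set = (tl i.1).set ∩ {z : ℝ × ℝ | c ≤ z.2} := by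
        intro i; rw [htl'def]; exact Trap.trunc_set _ _ _
      have htl'istrict : ∀ i : {i : ι // c < (tl i).b},
          (tl' i).istrict = (tl i.1).istrict ∩ {z : ℝ × ℝ | c < z.2} := by
        intro i; rw [htl'def]; exact Trap.trunc_istrict _ _ _
      have hT'set : T'.set = T.set ∩ {z : ℝ × ℝ | c ≤ z.2} := Trap.trunc_set _ _ _
      have hT'istrict : T'.istrict = T.istrict ∩ {z : ℝ × ℝ | c < z.2} :=
        Trap.trunc_istrict _ _ _
      have hdisj' : ∀ i j : {i : ι // c < (tl i).b}, i ≠ j →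
          (tl' i).istrict ∩ (tl' j).istrict = ∅ := by
        intro i j hij
        have hij' : i.1 ≠ j.1 := fun h => hij (Subtype.ext h)
        apply Set.eq_empty_of_subset_empty
        intro z hz
        rw [htl'istrict i] at hz
        rw [htl'istrict j] at hz
        have : z ∈ (tl i.1).istrict ∩ (tl j.1).istrict := ⟨hz.1.1, hz.2.1⟩
        rw [hdisj i.1 j.1 hij'] at this
        exact this
      have hunion' : (⋃ i, (tl' i).set) = T'.set := by
        apply Set.Subset.antisymm
        · intro z hz
          rw [Set.mem_iUnion] at hz
          obtain ⟨i, hzi⟩ := hz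
          rw [htl'set i] at hzi
          rw [hT'set]
          exact ⟨hsub i.1 hzi.1, hzi.2⟩
        · intro z hz
          rw [hT'set] at hz
          obtain ⟨hz1, hzc⟩ := hz
          rcases eq_or_lt_of_le (show c ≤ z.2 from hzc) with heq | hlt2
          · -- z.2 = c : approach from above along the segment to a top point of T
            set w : ℝ × ℝ := ((T.l2 + T.r2)/2, T.b) with hwdef
            have hwmem : w ∈ T.set := by
              refine ⟨T.hab.le, le_rfl, ?_, ?_⟩
              · show T.L w.2 ≤ w.1
                rw [hwdef]
                simp only []
                rw [T.L_b]
                linarith [T.h2]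
              · show w.1 ≤ T.R w.2
                rw [hwdef]
                simp only []
                rw [T.R_b]
                linarith [T.h2]
            have hdir : ∀ ε : ℝ, 0 < ε → ε ≤ 1 → z + ε • (w - z) ∈ T.set := by
              intro ε h1 h2
              have hc' := T.convex hz1 hwmem (by linarith : (0:ℝ) ≤ 1 - ε) h1.le
                (by ring)
              have he : (1 - ε) • z + ε • w = z + ε • (w - z) := by
                rw [sub_smul, one_smul, smul_sub]; abel
              rwa [he] at hc'
            obtain ⟨k, hzk, ε₁, hε₁0, hk⟩ := exists_tile_dir tl T hunion z (w - z) 1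
              one_pos hdir
            have hbk : c < (tl k).b := by
              set ε₂ := min ε₁ 1 with hε₂def
              have hε₂0 : 0 < ε₂ := lt_min hε₁0 one_pos
              have hp := hk ε₂ hε₂0 (min_le_left _ _)
              have h2 := hp.2.1
              have hco : (z + ε₂ • (w - z)).2 = z.2 + ε₂ * (T.b - z.2) := by
                rw [hwdef]
                show z.2 + ε₂ * (T.b - z.2) = z.2 + ε₂ * (T.b - z.2)
                rfl
              rw [hco] at h2
              have hz2c : z.2 = c := heq.symm
              nlinarith [mul_pos hε₂0 (show (0:ℝ) < T.b - z.2 by rw [hz2c]; linarith)]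
            rw [Set.mem_iUnion]
            refine ⟨⟨k, hbk⟩, ?_⟩
            rw [htl'set ⟨k, hbk⟩]
            exact ⟨hzk, hzc⟩
          · have hz1' := hz1
            rw [← hunion] at hz1'
            obtain ⟨_, ⟨⟨i, rfl⟩, hzi⟩⟩ := hz1'
            have hbi : c < (tl i).b := lt_of_lt_of_le hlt2 hzi.2.1
            rw [Set.mem_iUnion]
            refine ⟨⟨i, hbi⟩, ?_⟩
            rw [htl'set ⟨i, hbi⟩]
            exact ⟨hzi, hzc⟩
      -- counting
      set D := Finset.univ.filter (fun i => (tl i).b = c) with hDdef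
      have hjdD : jd ∈ D := Finset.mem_filter.mpr ⟨Finset.mem_univ _, hjd⟩
      have hDpos : 1 ≤ D.card := Finset.card_pos.mpr ⟨jd, hjdD⟩
      have hDle : D.card ≤ Fintype.card ι := by
        rw [← Finset.card_univ]
        exact Finset.card_le_card (Finset.filter_subset _ _)
      have hcards : Fintype.card {i : ι // c < (tl i).b} = Fintype.card ι - D.card := by
        rw [Fintype.card_subtype]
        have he : Finset.univ.filter (fun i => c < (tl i).b)
            = Finset.univ.filter (fun i => ¬((tl i).b = c)) := by
          apply Finset.filter_congr
          intro i _
          constructor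
          · intro h; exact (ne_of_gt h)
          · intro h; exact lt_of_le_of_ne (hcblev i) (Ne.symm h)
        rw [he, Finset.filter_not, Finset.card_sdiff_of_subset (Finset.filter_subset _ _),
          Finset.card_univ, ← hDdef]
      have hcard' : Fintype.card {i : ι // c < (tl i).b} ≤ N := by
        have hlt' : Fintype.card {i : ι // c < (tl i).b} < Fintype.card ι := by
          omega
        omega
      obtain ⟨s', hs'card, hs'ne, hs'cov⟩ := IH _ T' tl' hcard' hdisj' hunion'
      -- leftmost dying tile
      set ym1 := (T.a + c)/2 with hym1def
      have hym1A : T.a < ym1 := by rw [hym1def]; linarith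
      have hym1c : ym1 < c := by rw [hym1def]; linarith
      obtain ⟨i0, hi0D, hi0min⟩ := Finset.exists_min_image D (fun i => (tl i).L ym1)
        ⟨jd, hjdD⟩
      set eH : (ℝ × ℝ) × (ℝ × ℝ) := ((((0:ℝ), c) : ℝ × ℝ), (((1:ℝ), c) : ℝ × ℝ))
        with heHdef
      set sD := (D.erase i0).image (fun i => ((tl i).leftP, (tl i).leftQ)) with hsDdef
      refine ⟨s' ∪ insert eH sD, ?_, ?_, ?_⟩
      · have h1 : (s' ∪ insert eH sD).card ≤ s'.card + (insert eH sD).card :=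
          Finset.card_union_le _ _
        have h2 : (insert eH sD).card ≤ sD.card + 1 := Finset.card_insert_le _ _
        have h3 : sD.card ≤ (D.erase i0).card := Finset.card_image_le
        have h4 : (D.erase i0).card = D.card - 1 := Finset.card_erase_of_mem hi0D
        omega
      · intro e he
        rw [Finset.mem_union] at he
        rcases he with he | he
        · exact hs'ne e he
        · rw [Finset.mem_insert] at he
          rcases he with he | he
          · rw [he, heHdef]; exact hlineP_ne c
          · rw [hsDdef, Finset.mem_image] at he
            obtain ⟨i, _, rfl⟩ := he
            exact (tl i).leftP_ne
      · -- coverage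
        intro z hz
        obtain ⟨hzT, hzi'⟩ := hz
        rw [Set.mem_iUnion] at hzi'
        obtain ⟨i, hzi, hni⟩ := hzi'
        have hnall : ∀ k : ι, z ∉ (tl k).istrict := by
          intro k hk
          exact hni (by rw [not_mem_two hdisj hzi hk]; exact hk)
        rcases lt_trichotomy z.2 c with hlt | heq | hgt
        · -- below the cut level
          have hzT2 := hzT.2.2.1  -- T.L z.2 < z.1
          have hzT3 := hzT.2.2.2  -- z.1 < T.R z.2
          -- find a tile whose LEFT edge contains z
          have hkey : ∃ k, z ∈ (tl k).set ∧ z.1 = (tl k).L z.2 ∧ (tl k).a = T.a := by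
            have hi' := hht i z hzi hzT hlt
            rcases (tl i).edge_cases hzi (hnall i) hi'.2.1 hi'.2.2 with hL | hR
            · exact ⟨i, hzi, hL, hi'.1⟩
            · obtain ⟨k, hzk, hkR⟩ := right_neighbor hunion hzT
              have hk' := hht k z hzk hzT hlt
              rcases (tl k).edge_cases hzk (hnall k) hk'.2.1 hk'.2.2 with hL | hR'
              · exact ⟨k, hzk, hL, hk'.1⟩
              · exfalso; rw [hR'] at hkR; exact lt_irrefl _ hkR
          obtain ⟨k, hzk, hzL, hka⟩ := hkey
          have hkin := hht k z hzk hzT hlt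
          rcases eq_or_lt_of_le (hcblev k) with hkc | hkc
          · -- k is a dying tile (b_k = c)
            by_cases hk0 : k = i0
            · -- k is the leftmost dying tile : look at the left neighbour
              subst hk0
              obtain ⟨C, hzC, hCgt⟩ := left_neighbor hunion hzT
              have hCin := hht C z hzC hzT hlt
              have hzRC : z.1 = (tl C).R z.2 := by
                rcases (tl C).edge_cases hzC (hnall C) hCin.2.1 hCin.2.2 with h | h
                · exfalso; rw [h] at hCgt; exact lt_irrefl _ hCgt
                · exact h
              rcases eq_or_lt_of_le (hcblev C) with hCc | hCc
              · -- C is dying too : contradiction with minimality of i0=k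
                exfalso
                have hCD : C ∈ D := Finset.mem_filter.mpr ⟨Finset.mem_univ _, hCc.symm⟩
                have hwk : ∀ y : ℝ, T.a < y → y < c → (tl k).L y < (tl k).R y := by
                  intro y h1 h2
                  exact (tl k).width_pos (by rw [hka]; exact h1) (by rw [← hkc]; exact h2)
                have hwC : ∀ y : ℝ, T.a < y → y < c → (tl C).L y < (tl C).R y := by
                  intro y h1 h2
                  exact (tl C).width_pos (by rw [hCin.1]; exact h1)
                    (by rw [← hCc]; exact h2)
                have hCk : C ≠ k := by
                  intro h
                  rw [h] at hzRC
                  have := hwk z.2 hzT.1 hlt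
                  rw [← hzL, ← hzRC] at this
                  exact lt_irrefl _ this
                have hdich : ∀ y : ℝ, T.a < y → y < c →
                    ((tl C).R y ≤ (tl k).L y ∨ (tl k).R y ≤ (tl C).L y) := by
                  intro y h1 h2
                  by_contra hcon
                  push_neg at hcon
                  set x := (max ((tl C).L y) ((tl k).L y)
                    + min ((tl C).R y) ((tl k).R y))/2 with hxdef
                  have hmm : max ((tl C).L y) ((tl k).L y)
                      < min ((tl C).R y) ((tl k).R y) := by
                    rw [lt_min_iff, max_lt_iff, max_lt_iff]
                    exact ⟨⟨hwC y h1 h2, hcon.1⟩, ⟨hcon.2, hwk y h1 h2⟩⟩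
                  have hxl : max ((tl C).L y) ((tl k).L y) < x := by rw [hxdef]; linarith
                  have hxr : x < min ((tl C).R y) ((tl k).R y) := by rw [hxdef]; linarith
                  have hzC' : ((x, y) : ℝ × ℝ) ∈ (tl C).istrict := by
                    refine ⟨by rw [hCin.1]; exact h1, by rw [← hCc]; exact h2, ?_, ?_⟩
                    · exact lt_of_le_of_lt (le_max_left _ _) hxl
                    · exact lt_of_lt_of_le hxr (min_le_left _ _)
                  have hzk' : ((x, y) : ℝ × ℝ) ∈ (tl k).istrict := by
                    refine ⟨by rw [hka]; exact h1, by rw [← hkc]; exact h2, ?_, ?_⟩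
                    · exact lt_of_le_of_lt (le_max_right _ _) hxl
                    · exact lt_of_lt_of_le hxr (min_le_right _ _)
                  have : ((x, y) : ℝ × ℝ) ∈ (tl C).istrict ∩ (tl k).istrict :=
                    ⟨hzC', hzk'⟩
                  rw [hdisj C k hCk] at this
                  exact this
                set M := fun y : ℝ => ((tl k).L y + (tl k).R y)
                  - ((tl C).L y + (tl C).R y) with hMdef
                have hMaff : AffW M :=
                  AffW.sub (AffW.add (tl k).L_affw (tl k).R_affw)
                    (AffW.add (tl C).L_affw (tl C).R_affw)
                have hMz : 0 < M z.2 := by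
                  have h1 := hwk z.2 hzT.1 hlt
                  have h2 := hwC z.2 hzT.1 hlt
                  rw [hMdef]
                  simp only []
                  linarith [hzL.symm, hzRC.symm]
                have hMym : 0 < M ym1 := by
                  by_contra hle
                  push_neg at hle
                  obtain ⟨ys, hys1, hys2, hys0⟩ : ∃ ys : ℝ, min ym1 z.2 ≤ ys ∧
                      ys ≤ max ym1 z.2 ∧ M ys = 0 := by
                    rcases eq_or_lt_of_le hle with h | h
                    · exact ⟨ym1, min_le_left _ _, le_max_left _ _, h⟩
                    · exact hMaff.exists_root h hMz.le
                  have hysA : T.a < ys := lt_of_lt_of_le (lt_min hym1A hzT.1) hys1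
                  have hysc : ys < c := lt_of_le_of_lt hys2 (max_lt hym1c hlt)
                  have h1 := hwC ys hysA hysc
                  have h2 := hwk ys hysA hysc
                  rw [hMdef] at hys0
                  simp only [] at hys0
                  rcases hdich ys hysA hysc with h | h
                  · linarith
                  · linarith
                rcases hdich ym1 hym1A hym1c with h | h
                · have h1 := hwC ym1 hym1A hym1c
                  have h2 := hi0min C hCD
                  linarith
                · have h1 := hwC ym1 hym1A hym1c
                  have h2 := hwk ym1 hym1A hym1c
                  rw [hMdef] at hMym
                  simp only [] at hMym
                  linarith
              · -- C survives : reuse its RIGHT line from the inductive cover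
                set εr := ((tl C).b - c)/2 with hεrdef
                have hεr0 : 0 < εr := by rw [hεrdef]; linarith
                have hw : ∀ ε : ℝ, 0 < ε → ε ≤ εr →
                    (((tl C).R (c+ε), c+ε) : ℝ × ℝ) ∈
                      (T'.istrict ∩ ⋃ i', ((tl' i').set \ (tl' i').istrict)) := by
                  intro ε h1 h2
                  have hyb : c + ε < (tl C).b := by rw [hεrdef] at h2; linarith
                  have hya : (tl C).a < c + ε := by rw [hCin.1]; linarith
                  have hyB : c + ε < T.b := lt_of_lt_of_le hyb (hab C).2
                  have hyA : T.a < c + ε := by linarith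
                  have hwid : (tl C).L (c+ε) < (tl C).R (c+ε) := (tl C).width_pos hya hyb
                  have hTL : T.L (c+ε) < (tl C).R (c+ε) :=
                    lt_of_le_of_lt (sub_L (hsub C) hya.le hyb.le) hwid
                  have hTR : (tl C).R (c+ε) < T.R (c+ε) := by
                    have hf : AffW (fun y => T.R y - (tl C).R y) :=
                      AffW.sub T.R_affw (tl C).R_affw
                    have hga : 0 ≤ T.R (tl C).a - (tl C).R (tl C).a :=
                      sub_nonneg.mpr (sub_R (hsub C) le_rfl (tl C).hab.le)
                    have hgb : 0 ≤ T.R (tl C).b - (tl C).R (tl C).b :=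
                      sub_nonneg.mpr (sub_R (hsub C) (tl C).hab.le le_rfl)
                    have h0 : 0 < T.R z.2 - (tl C).R z.2 := by
                      rw [← hzRC]; linarith
                    have := hf.pos_interior hga hgb hCin.2.1 hCin.2.2 h0 hya hyb
                    simpa using this
                  constructor
                  · rw [hT'istrict]
                    exact ⟨⟨hyA, hyB, hTL, hTR⟩, by show c < c + ε; linarith⟩
                  · rw [Set.mem_iUnion]
                    refine ⟨⟨C, hCc⟩, ?_, ?_⟩
                    · rw [htl'set ⟨C, hCc⟩]
                      exact ⟨⟨hya.le, hyb.le, hwid.le, le_rfl⟩,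
                        by show c ≤ c + ε; linarith⟩
                    · rw [htl'istrict ⟨C, hCc⟩]
                      rintro ⟨hcon, -⟩
                      exact lt_irrefl _ hcon.2.2.2
                obtain ⟨e, he, hzl⟩ := reuse_line hs'cov (tl C).R_affw hεr0 hw hzRC
                rw [Set.mem_iUnion₂]
                exact ⟨e, Finset.mem_union_left _ he, hzl⟩
            · -- k is dying but not leftmost : its left line is in the cover
              rw [Set.mem_iUnion₂]
              refine ⟨((tl k).leftP, (tl k).leftQ), ?_, ?_⟩
              · apply Finset.mem_union_right
                apply Finset.mem_insert_of_mem
                rw [hsDdef, Finset.mem_image]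
                refine ⟨k, ?_, rfl⟩
                apply Finset.mem_erase_of_ne_of_mem hk0
                exact Finset.mem_filter.mpr ⟨Finset.mem_univ _, hkc.symm⟩
              · rw [(tl k).mem_leftLine_iff]; exact hzL
          · -- k survives : reuse its LEFT line from the inductive cover
            set εr := ((tl k).b - c)/2 with hεrdef
            have hεr0 : 0 < εr := by rw [hεrdef]; linarith
            have hw : ∀ ε : ℝ, 0 < ε → ε ≤ εr →
                (((tl k).L (c+ε), c+ε) : ℝ × ℝ) ∈
                  (T'.istrict ∩ ⋃ i', ((tl' i').set \ (tl' i').istrict)) := by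
              intro ε h1 h2
              have hyb : c + ε < (tl k).b := by rw [hεrdef] at h2; linarith
              have hya : (tl k).a < c + ε := by rw [hka]; linarith
              have hyB : c + ε < T.b := lt_of_lt_of_le hyb (hab k).2
              have hyA : T.a < c + ε := by linarith
              have hwid : (tl k).L (c+ε) < (tl k).R (c+ε) := (tl k).width_pos hya hyb
              have hTL : T.L (c+ε) < (tl k).L (c+ε) := by
                have hf : AffW (fun y => (tl k).L y - T.L y) :=
                  AffW.sub (tl k).L_affw T.L_affw
                have hga : 0 ≤ (tl k).L (tl k).a - T.L (tl k).a :=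
                  sub_nonneg.mpr (sub_L (hsub k) le_rfl (tl k).hab.le)
                have hgb : 0 ≤ (tl k).L (tl k).b - T.L (tl k).b :=
                  sub_nonneg.mpr (sub_L (hsub k) (tl k).hab.le le_rfl)
                have h0 : 0 < (tl k).L z.2 - T.L z.2 := by rw [← hzL]; linarith
                have := hf.pos_interior hga hgb hkin.2.1 hkin.2.2 h0 hya hyb
                simpa using this
              have hTR : (tl k).L (c+ε) < T.R (c+ε) :=
                lt_of_lt_of_le hwid (sub_R (hsub k) hya.le hyb.le)
              constructor
              · rw [hT'istrict]
                exact ⟨⟨hyA, hyB, hTL, hTR⟩, by show c < c + ε; linarith⟩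
              · rw [Set.mem_iUnion]
                refine ⟨⟨k, hkc⟩, ?_, ?_⟩
                · rw [htl'set ⟨k, hkc⟩]
                  exact ⟨⟨hya.le, hyb.le, le_rfl, hwid.le⟩,
                    by show c ≤ c + ε; linarith⟩
                · rw [htl'istrict ⟨k, hkc⟩]
                  rintro ⟨hcon, -⟩
                  exact lt_irrefl _ hcon.2.2.1
            obtain ⟨e, he, hzl⟩ := reuse_line hs'cov (tl k).L_affw hεr0 hw hzL
            rw [Set.mem_iUnion₂]
            exact ⟨e, Finset.mem_union_left _ he, hzl⟩
        · -- on the cut level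
          rw [Set.mem_iUnion₂]
          refine ⟨eH, Finset.mem_union_right _ (Finset.mem_insert_self _ _), ?_⟩
          rw [heHdef]
          rw [mem_hline_iff]
          exact heq
        · -- above the cut level : inductive cover
          have hbi : c < (tl i).b := lt_of_lt_of_le hgt hzi.2.1
          have hzE' : z ∈ T'.istrict ∩ ⋃ i', ((tl' i').set \ (tl' i').istrict) := by
            constructor
            · rw [hT'istrict]; exact ⟨hzT, hgt⟩
            · rw [Set.mem_iUnion]
              refine ⟨⟨i, hbi⟩, ?_, ?_⟩
              · rw [htl'set ⟨i, hbi⟩]; exact ⟨hzi, hgt.le⟩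
              · rw [htl'istrict ⟨i, hbi⟩]
                rintro ⟨hcon, -⟩
                exact hni hcon
          have := hs'cov hzE'
          rw [Set.mem_iUnion₂] at this ⊢
          obtain ⟨e, he, hl⟩ := this
          exact ⟨e, Finset.mem_union_left _ he, hl⟩

lemma extract_trap {S : Set (ℝ × ℝ)}
    (h : ∃ (y₁ y₂ l₁ r₁ l₂ r₂ : ℝ), y₁ < y₂ ∧ l₁ ≤ r₁ ∧ l₂ ≤ r₂ ∧ (l₁ < r₁ ∨ l₂ < r₂) ∧
      S = convexHull ℝ {(l₁, y₁), (r₁, y₁), (l₂, y₂), (r₂, y₂)}) :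
    ∃ t : Trap, S = t.set := by
  obtain ⟨y₁, y₂, l₁, r₁, l₂, r₂, h1, h2, h3, h4, h5⟩ := h
  exact ⟨⟨y₁, y₂, l₁, r₁, l₂, r₂, h1, h2, h3, h4⟩, by
    rw [h5, Trap.set_eq_hull]⟩

theorem trapezoid_tiling_boundary_cover'
    (T : Set (ℝ × ℝ))
    (hT : ∃ (y₁ y₂ l₁ r₁ l₂ r₂ : ℝ), y₁ < y₂ ∧ l₁ ≤ r₁ ∧ l₂ ≤ r₂ ∧ (l₁ < r₁ ∨ l₂ < r₂) ∧
      T = convexHull ℝ {(l₁, y₁), (r₁, y₁), (l₂, y₂), (r₂, y₂)})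
    (n : ℕ) (tile : Fin n → Set (ℝ × ℝ))
    (htile : ∀ i, ∃ (y₁ y₂ l₁ r₁ l₂ r₂ : ℝ), y₁ < y₂ ∧ l₁ ≤ r₁ ∧ l₂ ≤ r₂ ∧
      (l₁ < r₁ ∨ l₂ < r₂) ∧
      tile i = convexHull ℝ {(l₁, y₁), (r₁, y₁), (l₂, y₂), (r₂, y₂)})
    (hdisj : ∀ i j, i ≠ j → interior (tile i) ∩ interior (tile j) = ∅)
    (hunion : (⋃ i, tile i) = T) :
    ∃ p q : Fin (n - 1) → ℝ × ℝ, (∀ k, p k ≠ q k) ∧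
      interior T ∩ (⋃ i, frontier (tile i)) ⊆
        ⋃ k, {z : ℝ × ℝ | ∃ t : ℝ, z = p k + t • (q k - p k)} := by
  classical
  obtain ⟨tT, htT⟩ := extract_trap hT
  choose tt htt using fun i => extract_trap (htile i)
  have hdisj' : ∀ i j, i ≠ j → (tt i).istrict ∩ (tt j).istrict = ∅ := by
    intro i j hij
    have := hdisj i j hij
    rw [htt i, htt j, (tt i).interior_eq, (tt j).interior_eq] at this
    exact this
  have hunion' : (⋃ i, (tt i).set) = tT.set := by
    rw [← htT, ← hunion]
    exact Set.iUnion_congr fun i => (htt i).symm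
  obtain ⟨s, hscard, hsne, hscov⟩ := main_cover n (Fin n) tT tt
    (le_of_eq (Fintype.card_fin n)) hdisj' hunion'
  set l := s.toList with hldef
  have hlen : l.length ≤ n - 1 := by
    rw [hldef, Finset.length_toList]
    rw [Fintype.card_fin] at hscard
    omega
  set d : (ℝ × ℝ) × (ℝ × ℝ) := (((0:ℝ), (0:ℝ)), ((1:ℝ), (0:ℝ))) with hddef
  set f : Fin (n - 1) → (ℝ × ℝ) × (ℝ × ℝ) := fun k => l.getD k d with hfdef
  refine ⟨fun k => (f k).1, fun k => (f k).2, ?_, ?_⟩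
  · intro k
    rw [hfdef]
    simp only []
    rcases lt_or_ge (k : ℕ) l.length with h | h
    · rw [List.getD_eq_getElem l d h]
      apply hsne
      rw [← Finset.mem_toList]
      exact List.getElem_mem _
    · rw [List.getD_eq_default l d h, hddef]
      simp [Prod.ext_iff]
  · intro z hz
    have hz' : z ∈ tT.istrict ∩ ⋃ i, ((tt i).set \ (tt i).istrict) := by
      constructor
      · have := hz.1
        rw [htT, (tT).interior_eq] at this
        exact this
      · have := hz.2
        rw [Set.mem_iUnion] at this ⊢
        obtain ⟨i, hi⟩ := this
        rw [htt i, (tt i).frontier_eq] at hi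
        exact ⟨i, hi⟩
    have := hscov hz'
    rw [Set.mem_iUnion₂] at this
    obtain ⟨e, he, hl⟩ := this
    have hmem : e ∈ l := by rw [hldef, Finset.mem_toList]; exact he
    obtain ⟨m, hm, hme⟩ := List.mem_iff_getElem.mp hmem
    set k : Fin (n - 1) := ⟨m, lt_of_lt_of_le hm hlen⟩ with hkdef
    rw [Set.mem_iUnion]
    refine ⟨k, ?_⟩
    have hfk : f k = e := by
      show l.getD (k : ℕ) d = e
      have hk' : (k : ℕ) = m := rfl
      rw [hk', List.getD_eq_getElem l d hm]
      exact hme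
    show z ∈ lineSet (f k).1 (f k).2
    rw [hfk]
    exact hl

end TrapTile








/-- If T is tiled by n tiles, each a trapezoid with two horizontal sides or a triangle
with a horizontal side (as is T itself), then the intersection of the interior of T with
the union of the boundaries of the tiles can be covered by at most n-1 lines. -/
theorem trapezoid_tiling_boundary_cover
    (T : Set (ℝ × ℝ)) (hT : IsHorizTrapOrTri T)
    (n : ℕ) (tile : Fin n → Set (ℝ × ℝ)) (htile : ∀ i, IsHorizTrapOrTri (tile i))
    (hdisj : ∀ i j, i ≠ j → interior (tile i) ∩ interior (tile j) = ∅)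
    (hunion : (⋃ i, tile i) = T) :
    ∃ p q : Fin (n - 1) → ℝ × ℝ, (∀ k, p k ≠ q k) ∧
      interior T ∩ (⋃ i, frontier (tile i)) ⊆
        ⋃ k, {z : ℝ × ℝ | ∃ t : ℝ, z = p k + t • (q k - p k)} := by
  exact trapezoid_tiling_boundary_cover' T hT n tile (fun i => htile i)
    hdisj hunion
end

section
/- Suppose a rectangle is tiled by n rectangles, where the i-th tile has vertical side length aᵢ and horizontal side length bᵢ with aᵢ/bᵢ = pᵢ/qᵢ for positive integers pᵢ, qᵢ. Assume: (1) the y-coordinates of the vertices of the tiled rectangle are integers; (2) for each i, the real number aᵢ/pᵢ has distance at most 1/(2·max{pᵢ,qᵢ}) from an integer; and (3) every coordinate of every vertex of every tile has distance less than 1/4 from an integer. Then the side lengths of the i-th tile are integer multiples of pᵢ and qᵢ respectively; in particular all side lengths of all tiles are integers. -/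
open MeasureTheory Set

/-- The union of small open strips around half-integers. -/
noncomputable def Tset : Set ℝ := ⋃ l : ℤ, Set.Ioo ((l:ℝ) + 3/8) ((l:ℝ) + 5/8)

lemma Tset_measurable : MeasurableSet Tset :=
  MeasurableSet.iUnion fun _ => measurableSet_Ioo

/-- Key 1-D computation: if the endpoints of `[u,v]` are within `1/4` of the integers
`ru`, `rv`, then the part of `Tset` inside `[u,v]` has measure `(rv-ru)/4`. -/
lemma vol_inter_Tset (u v : ℝ) (ru rv : ℤ) (hu : |u - ru| < 1/4) (hv : |v - rv| < 1/4)
    (huv : u ≤ v) :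
    volume (Icc u v ∩ Tset) = ENNReal.ofReal (((rv:ℝ) - ru) / 4) := by
  rw [abs_sub_lt_iff] at hu hv
  have hrle : ru ≤ rv := by
    have : (ru:ℝ) < rv + 1 := by push_cast; linarith
    exact_mod_cast Int.lt_add_one_iff.mp (by exact_mod_cast this)
  have hset : Icc u v ∩ Tset
      = ⋃ l ∈ Finset.Icc ru (rv - 1), Ioo ((l:ℝ) + 3/8) ((l:ℝ) + 5/8) := by
    ext t
    simp only [Tset, mem_inter_iff, mem_Icc, mem_iUnion, mem_Ioo, Finset.mem_Icc,
      exists_prop]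
    constructor
    · rintro ⟨⟨hut, htv⟩, l, hl1, hl2⟩
      refine ⟨l, ⟨?_, ?_⟩, hl1, hl2⟩
      · have : (ru:ℝ) < l + 1 := by linarith
        exact_mod_cast Int.lt_add_one_iff.mp (by exact_mod_cast this)
      · have : (l:ℝ) < rv := by linarith
        have := (Int.lt_iff_add_one_le).mp (show l < rv by exact_mod_cast this)
        omega
    · rintro ⟨l, ⟨hl1, hl2⟩, ht1, ht2⟩
      have hl1' : (ru:ℝ) ≤ l := by exact_mod_cast hl1
      have hl2' : (l:ℝ) ≤ rv - 1 := by
        have : (l:ℝ) ≤ ((rv - 1 : ℤ) : ℝ) := by exact_mod_cast hl2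
        push_cast at this; linarith
      exact ⟨⟨by linarith, by linarith⟩, l, ht1, ht2⟩
  rw [hset, measure_biUnion_finset ?hd (fun b _ => measurableSet_Ioo)]
  case hd =>
    intro i _ j _ hij
    have : (i:ℝ) + 1 ≤ j ∨ (j:ℝ) + 1 ≤ i := by
      rcases lt_or_gt_of_ne hij with hlt | hlt
      · left; exact_mod_cast Int.lt_iff_add_one_le.mp hlt
      · right; exact_mod_cast Int.lt_iff_add_one_le.mp hlt
    apply Set.disjoint_left.mpr
    rintro t ⟨h1, h2⟩ ⟨h3, h4⟩
    rcases this with hle | hle <;> linarith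
  have hvol : ∀ l ∈ Finset.Icc ru (rv - 1),
      volume (Ioo ((l:ℝ) + 3/8) ((l:ℝ) + 5/8)) = ENNReal.ofReal (1/4) := by
    intro l _
    rw [Real.volume_Ioo]; norm_num
  rw [Finset.sum_congr rfl hvol, Finset.sum_const, Int.card_Icc]
  have hcard : (rv - 1 + 1 - ru).toNat = (rv - ru).toNat := by omega
  rw [hcard, nsmul_eq_mul, ← ENNReal.ofReal_natCast, ← ENNReal.ofReal_mul (by positivity)]
  congr 1
  have : ((rv - ru).toNat : ℝ) = (rv:ℝ) - ru := by
    have : ((rv - ru).toNat : ℤ) = rv - ru := Int.toNat_of_nonneg (by omega)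
    exact_mod_cast congrArg (Int.cast : ℤ → ℝ) this
  rw [this]; ring

lemma vol_restrict_prod (A B S1 S2 : Set ℝ) (hA : MeasurableSet A) (hB : MeasurableSet B) :
    (volume.restrict (S1 ×ˢ S2)) (A ×ˢ B) = volume (A ∩ S1) * volume (B ∩ S2) := by
  rw [Measure.restrict_apply (hA.prod hB), Set.prod_inter_prod,
    Measure.volume_eq_prod, Measure.prod_prod]

lemma tiling_sum (n : ℕ) (tile : Fin n → Set (ℝ × ℝ)) (hmeas : ∀ i, MeasurableSet (tile i))
    (hdisj0 : ∀ i j, i ≠ j → volume (tile i ∩ tile j) = 0) (S : Set (ℝ × ℝ)) :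
    (volume.restrict S) (⋃ i, tile i) = ∑ i, (volume.restrict S) (tile i) := by
  rw [measure_iUnion₀ ?hd (fun i => ((hmeas i).nullMeasurableSet).mono_ac
    Measure.restrict_le_self.absolutelyContinuous), tsum_fintype]
  case hd =>
    intro i j hij
    have h1 : (volume.restrict S) (tile i ∩ tile j) ≤ volume (tile i ∩ tile j) := by
      rw [Measure.restrict_apply ((hmeas i).inter (hmeas j))]
      exact measure_mono (inter_subset_left)
    exact le_antisymm (h1.trans_eq (hdisj0 i j hij)) zero_le


/-- Suppose a rectangle with integer y-coordinates is tiled by n rectangles, the i-th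
tile having vertical side aᵢ = hᵢ and horizontal side bᵢ = wᵢ with hᵢ/wᵢ = pᵢ/qᵢ; if
each hᵢ/pᵢ is within 1/(2 max{pᵢ,qᵢ}) of an integer and every vertex coordinate of every
tile is within less than 1/4 of an integer, then the side lengths of the i-th tile are
integer multiples of pᵢ and qᵢ respectively (with the same multiplier); in particular
all side lengths are integers. -/
theorem rect_tiling_almost_integer_sides
    (a b c d : ℝ) (hab : a < b) (hcd : c < d)
    (hc : ∃ m : ℤ, c = m) (hd : ∃ m : ℤ, d = m)
    (n : ℕ) (x y w h : Fin n → ℝ) (hw : ∀ i, 0 < w i) (hh : ∀ i, 0 < h i)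
    (p q : Fin n → ℕ) (hp : ∀ i, 0 < p i) (hq : ∀ i, 0 < q i)
    (hratio : ∀ i, h i * q i = w i * p i)
    (hdisj : ∀ i j, i ≠ j →
      (Set.Ioo (x i) (x i + w i) ×ˢ Set.Ioo (y i) (y i + h i)) ∩
      (Set.Ioo (x j) (x j + w j) ×ˢ Set.Ioo (y j) (y j + h j)) = ∅)
    (hunion : (⋃ i, Set.Icc (x i) (x i + w i) ×ˢ Set.Icc (y i) (y i + h i))
      = Set.Icc a b ×ˢ Set.Icc c d)
    (hci : ∀ i, ∃ z : ℤ, |h i / p i - z| ≤ 1 / (2 * max (p i) (q i)))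
    (hclose : ∀ i,
      (∃ m : ℤ, |x i - m| < 1/4) ∧ (∃ m : ℤ, |x i + w i - m| < 1/4) ∧
      (∃ m : ℤ, |y i - m| < 1/4) ∧ (∃ m : ℤ, |y i + h i - m| < 1/4)) :
    ∀ i, ∃ m : ℤ, h i = m * p i ∧ w i = m * q i := by
  obtain ⟨mc, hmc⟩ := hc
  obtain ⟨md, hmd⟩ := hd
  choose z hz using hci
  choose rx1 hrx1 using fun i => (hclose i).1
  choose rx2 hrx2 using fun i => (hclose i).2.1
  choose ry1 hry1 using fun i => (hclose i).2.2.1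
  choose ry2 hry2 using fun i => (hclose i).2.2.2
  -- basic positivity
  have hp' : ∀ i, (0:ℝ) < p i := fun i => by exact_mod_cast hp i
  have hq' : ∀ i, (0:ℝ) < q i := fun i => by exact_mod_cast hq i
  have hM' : ∀ i, (0:ℝ) < (max (p i) (q i) : ℕ) := fun i => by
    exact_mod_cast lt_of_lt_of_le (hp i) (le_max_left _ _)
  have hpM : ∀ i, (p i : ℝ) ≤ (max (p i) (q i) : ℕ) := fun i => by
    exact_mod_cast le_max_left (p i) (q i)
  have hqM : ∀ i, (q i : ℝ) ≤ (max (p i) (q i) : ℕ) := fun i => by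
    exact_mod_cast le_max_right (p i) (q i)
  -- the sharp ratio bound
  have hεb : ∀ i, |h i - z i * p i| ≤ (p i : ℝ) / (2 * (max (p i) (q i) : ℕ)) := by
    intro i
    have h2 : |h i - z i * p i| = (p i : ℝ) * |h i / p i - z i| := by
      rw [← abs_of_pos (hp' i), ← abs_mul]
      congr 1
      field_simp [(hp' i).ne']
      rw [abs_of_pos (hp' i)]; ring
    rw [h2]
    calc (p i : ℝ) * |h i / p i - z i|
        ≤ (p i : ℝ) * (1 / (2 * (max (p i) (q i) : ℕ))) :=
          mul_le_mul_of_nonneg_left (hz i) (le_of_lt (hp' i))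
      _ = (p i : ℝ) / (2 * (max (p i) (q i) : ℕ)) := mul_one_div _ _
  have hhz : ∀ i, |h i - z i * p i| ≤ 1/2 := by
    intro i
    refine (hεb i).trans ?_
    rw [div_le_div_iff₀ (by linarith [hM' i]) (by norm_num)]
    nlinarith [hpM i, hM' i]
  have hwv : ∀ i, w i = h i * q i / p i := fun i =>
    (eq_div_iff (ne_of_gt (hp' i))).mpr (hratio i).symm
  have hwz : ∀ i, |w i - z i * q i| ≤ 1/2 := by
    intro i
    have h2 : w i - z i * q i = (q i / p i) * (h i - z i * p i) := by
      rw [hwv i]; field_simp [(hp' i).ne']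
    rw [h2, abs_mul, abs_of_pos (div_pos (hq' i) (hp' i))]
    calc (q i / p i : ℝ) * |h i - z i * p i|
        ≤ (q i / p i) * ((p i : ℝ) / (2 * (max (p i) (q i) : ℕ))) :=
          mul_le_mul_of_nonneg_left (hεb i) (le_of_lt (div_pos (hq' i) (hp' i)))
      _ = (q i : ℝ) / (2 * (max (p i) (q i) : ℕ)) := by
          rw [div_mul_div_comm, mul_comm ((q i:ℝ)) ((p i:ℝ)),
            mul_div_mul_left _ _ (hp' i).ne']
      _ ≤ 1/2 := by
          rw [div_le_div_iff₀ (by linarith [hM' i]) (by norm_num)]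
          nlinarith [hqM i, hM' i]
  -- the rounded side lengths
  have hNY : ∀ i, (ry2 i : ℝ) - ry1 i = z i * p i := by
    intro i
    have a1 := hry1 i; have a2 := hry2 i
    rw [abs_lt] at a1 a2
    have h1 : |((ry2 i : ℝ) - ry1 i) - z i * p i| < 1 := by
      have h3 := hhz i
      rw [abs_le] at h3
      rw [abs_lt]
      constructor <;> linarith
    have h4 : |ry2 i - ry1 i - z i * (p i : ℤ)| < 1 := by
      have : |((ry2 i - ry1 i - z i * (p i:ℤ) : ℤ) : ℝ)| < 1 := by
        push_cast
        convert h1 using 2 <;> ring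
      exact_mod_cast this
    have h5 : ry2 i - ry1 i = z i * (p i : ℤ) := by
      rcases abs_lt.mp h4 with ⟨u1, u2⟩; omega
    exact_mod_cast h5
  have hNX : ∀ i, (rx2 i : ℝ) - rx1 i = z i * q i := by
    intro i
    have a1 := hrx1 i; have a2 := hrx2 i
    rw [abs_lt] at a1 a2
    have h1 : |((rx2 i : ℝ) - rx1 i) - z i * q i| < 1 := by
      have h3 := hwz i
      rw [abs_le] at h3
      rw [abs_lt]
      constructor <;> linarith
    have h4 : |rx2 i - rx1 i - z i * (q i : ℤ)| < 1 := by
      have : |((rx2 i - rx1 i - z i * (q i:ℤ) : ℤ) : ℝ)| < 1 := by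
        push_cast
        convert h1 using 2 <;> ring
      exact_mod_cast this
    have h5 : rx2 i - rx1 i = z i * (q i : ℤ) := by
      rcases abs_lt.mp h4 with ⟨u1, u2⟩; omega
    exact_mod_cast h5
  -- nonnegativity of rounded side lengths
  have hNYnn : ∀ i, 0 ≤ (ry2 i : ℝ) - ry1 i := by
    intro i
    rw [hNY i]
    have h3 := abs_le.mp (hhz i)
    have h6 : (-1:ℝ) < ((z i * (p i:ℤ) : ℤ):ℝ) := by push_cast; nlinarith [hh i, h3.2]
    have h7 : (0:ℤ) ≤ z i * (p i:ℤ) := by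
      have : (-1:ℤ) < z i * (p i:ℤ) := by exact_mod_cast h6
      omega
    exact_mod_cast h7
  have hNXnn : ∀ i, 0 ≤ (rx2 i : ℝ) - rx1 i := by
    intro i
    rw [hNX i]
    have h3 := abs_le.mp (hwz i)
    have h6 : (-1:ℝ) < ((z i * (q i:ℤ) : ℤ):ℝ) := by push_cast; nlinarith [hw i, h3.2]
    have h7 : (0:ℤ) ≤ z i * (q i:ℤ) := by
      have : (-1:ℤ) < z i * (q i:ℤ) := by exact_mod_cast h6
      omega
    exact_mod_cast h7
  -- the tiles
  have hmeas : ∀ i, MeasurableSet (Icc (x i) (x i + w i) ×ˢ Icc (y i) (y i + h i)) :=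
    fun i => measurableSet_Icc.prod measurableSet_Icc
  have hvol0 : ∀ i j, i ≠ j →
      volume ((Icc (x i) (x i + w i) ×ˢ Icc (y i) (y i + h i)) ∩
        (Icc (x j) (x j + w j) ×ˢ Icc (y j) (y j + h j))) = 0 := by
    intro i j hij
    have hdd := hdisj i j hij
    rw [Set.prod_inter_prod, Set.prod_eq_empty_iff] at hdd
    rw [Set.prod_inter_prod, Measure.volume_eq_prod, Measure.prod_prod,
      Icc_inter_Icc, Icc_inter_Icc, Real.volume_Icc, Real.volume_Icc]
    rcases hdd with he | he
    · rw [Ioo_inter_Ioo] at he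
      have hle : (x i + w i) ⊓ (x j + w j) ≤ x i ⊔ x j := by
        by_contra hcon
        push_neg at hcon
        exact (Set.nonempty_Ioo.mpr hcon).ne_empty he
      exact mul_eq_zero.mpr (Or.inl (ENNReal.ofReal_eq_zero.mpr (by linarith)))
    · rw [Ioo_inter_Ioo] at he
      have hle : (y i + h i) ⊓ (y j + h j) ≤ y i ⊔ y j := by
        by_contra hcon
        push_neg at hcon
        exact (Set.nonempty_Ioo.mpr hcon).ne_empty he
      exact mul_eq_zero.mpr (Or.inr (ENNReal.ofReal_eq_zero.mpr (by linarith)))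
  have hTS : ∀ S : Set (ℝ × ℝ), (volume.restrict S) (Icc a b ×ˢ Icc c d)
      = ∑ i, (volume.restrict S) (Icc (x i) (x i + w i) ×ˢ Icc (y i) (y i + h i)) := by
    intro S
    rw [← hunion]
    exact tiling_sum n _ hmeas hvol0 S
  -- the four mass identities
  have E1 : ENNReal.ofReal (b - a) * ENNReal.ofReal (d - c)
      = ∑ i, ENNReal.ofReal (w i) * ENNReal.ofReal (h i) := by
    have e := hTS (univ ×ˢ univ)
    rw [vol_restrict_prod _ _ _ _ measurableSet_Icc measurableSet_Icc, inter_univ, inter_univ,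
      Real.volume_Icc, Real.volume_Icc] at e
    rw [e]
    refine Finset.sum_congr rfl fun i _ => ?_
    rw [vol_restrict_prod _ _ _ _ measurableSet_Icc measurableSet_Icc, inter_univ, inter_univ,
      Real.volume_Icc, Real.volume_Icc, add_sub_cancel_left, add_sub_cancel_left]
  have E2 : volume (Icc a b ∩ Tset) * ENNReal.ofReal (d - c)
      = ∑ i, ENNReal.ofReal (((rx2 i:ℝ) - rx1 i)/4) * ENNReal.ofReal (h i) := by
    have e := hTS (Tset ×ˢ univ)
    rw [vol_restrict_prod _ _ _ _ measurableSet_Icc measurableSet_Icc, inter_univ,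
      Real.volume_Icc] at e
    rw [e]
    refine Finset.sum_congr rfl fun i _ => ?_
    rw [vol_restrict_prod _ _ _ _ measurableSet_Icc measurableSet_Icc, inter_univ,
      Real.volume_Icc, add_sub_cancel_left,
      vol_inter_Tset (x i) (x i + w i) (rx1 i) (rx2 i) (hrx1 i) (hrx2 i) (by linarith [hw i])]
  have hcd4 : volume (Icc c d ∩ Tset) = ENNReal.ofReal ((d - c)/4) := by
    have e := vol_inter_Tset c d mc md (by rw [hmc]; simp) (by rw [hmd]; simp) (le_of_lt hcd)
    rw [e]
    congr 1
    rw [hmc, hmd]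
  have E3 : ENNReal.ofReal (b - a) * ENNReal.ofReal ((d - c)/4)
      = ∑ i, ENNReal.ofReal (w i) * ENNReal.ofReal (((ry2 i:ℝ) - ry1 i)/4) := by
    have e := hTS (univ ×ˢ Tset)
    rw [vol_restrict_prod _ _ _ _ measurableSet_Icc measurableSet_Icc, inter_univ,
      Real.volume_Icc, hcd4] at e
    rw [e]
    refine Finset.sum_congr rfl fun i _ => ?_
    rw [vol_restrict_prod _ _ _ _ measurableSet_Icc measurableSet_Icc, inter_univ,
      Real.volume_Icc, add_sub_cancel_left,
      vol_inter_Tset (y i) (y i + h i) (ry1 i) (ry2 i) (hry1 i) (hry2 i) (by linarith [hh i])]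
  have E4 : volume (Icc a b ∩ Tset) * ENNReal.ofReal ((d - c)/4)
      = ∑ i, ENNReal.ofReal (((rx2 i:ℝ) - rx1 i)/4) * ENNReal.ofReal (((ry2 i:ℝ) - ry1 i)/4) := by
    have e := hTS (Tset ×ˢ Tset)
    rw [vol_restrict_prod _ _ _ _ measurableSet_Icc measurableSet_Icc, hcd4] at e
    rw [e]
    refine Finset.sum_congr rfl fun i _ => ?_
    rw [vol_restrict_prod _ _ _ _ measurableSet_Icc measurableSet_Icc,
      vol_inter_Tset (x i) (x i + w i) (rx1 i) (rx2 i) (hrx1 i) (hrx2 i) (by linarith [hw i]),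
      vol_inter_Tset (y i) (y i + h i) (ry1 i) (ry2 i) (hry1 i) (hry2 i) (by linarith [hh i])]
  -- converting to real identities
  have hVab_ne : volume (Icc a b ∩ Tset) ≠ ⊤ := by
    have hle : volume (Icc a b ∩ Tset) ≤ ENNReal.ofReal (b - a) := by
      rw [← Real.volume_Icc]
      exact measure_mono inter_subset_left
    exact ne_top_of_le_ne_top ENNReal.ofReal_ne_top hle
  have toR : ∀ (A B : ℝ), 0 ≤ A → 0 ≤ B →
      (ENNReal.ofReal A * ENNReal.ofReal B).toReal = A * B := by
    intro A B hA hB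
    rw [ENNReal.toReal_mul, ENNReal.toReal_ofReal hA, ENNReal.toReal_ofReal hB]
  have hfin : ∀ (g : Fin n → ℝ) (g' : Fin n → ℝ),
      (∑ i, ENNReal.ofReal (g i) * ENNReal.ofReal (g' i)).toReal
        = ∑ i, (ENNReal.ofReal (g i) * ENNReal.ofReal (g' i)).toReal := by
    intro g g'
    exact ENNReal.toReal_sum fun i _ =>
      ENNReal.mul_ne_top ENNReal.ofReal_ne_top ENNReal.ofReal_ne_top
  have r1 : (b - a) * (d - c) = ∑ i, w i * h i := by
    have e := congrArg ENNReal.toReal E1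
    rw [toR _ _ (by linarith) (by linarith), hfin] at e
    rw [e]
    exact Finset.sum_congr rfl fun i _ => toR _ _ (hw i).le (hh i).le
  have r2 : (volume (Icc a b ∩ Tset)).toReal * (d - c)
      = ∑ i, ((rx2 i:ℝ) - rx1 i)/4 * h i := by
    have e := congrArg ENNReal.toReal E2
    rw [ENNReal.toReal_mul, ENNReal.toReal_ofReal (by linarith : (0:ℝ) ≤ d - c), hfin] at e
    rw [e]
    exact Finset.sum_congr rfl fun i _ =>
      toR _ _ (by nlinarith [hNXnn i]) (hh i).le
  have r3 : (b - a) * ((d - c)/4) = ∑ i, w i * (((ry2 i:ℝ) - ry1 i)/4) := by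
    have e := congrArg ENNReal.toReal E3
    rw [toR _ _ (by linarith) (by linarith), hfin] at e
    rw [e]
    exact Finset.sum_congr rfl fun i _ =>
      toR _ _ (hw i).le (by nlinarith [hNYnn i])
  have r4 : (volume (Icc a b ∩ Tset)).toReal * ((d - c)/4)
      = ∑ i, (((rx2 i:ℝ) - rx1 i)/4) * (((ry2 i:ℝ) - ry1 i)/4) := by
    have e := congrArg ENNReal.toReal E4
    rw [ENNReal.toReal_mul, ENNReal.toReal_ofReal (by linarith : (0:ℝ) ≤ (d - c)/4), hfin] at e
    rw [e]
    exact Finset.sum_congr rfl fun i _ =>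
      toR _ _ (by nlinarith [hNXnn i]) (by nlinarith [hNYnn i])
  -- the key cancellation
  have key : ∑ i, (w i - ((rx2 i:ℝ) - rx1 i)) * (h i - ((ry2 i:ℝ) - ry1 i)) = 0 := by
    have h5 : ∑ i, (w i - ((rx2 i:ℝ) - rx1 i)) * (h i - ((ry2 i:ℝ) - ry1 i))
        = (∑ i, w i * h i) - 4*(∑ i, w i * (((ry2 i:ℝ) - ry1 i)/4))
          - 4*(∑ i, (((rx2 i:ℝ) - rx1 i)/4) * h i)
          + 16*(∑ i, (((rx2 i:ℝ) - rx1 i)/4) * (((ry2 i:ℝ) - ry1 i)/4)) := by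
      rw [Finset.mul_sum, Finset.mul_sum, Finset.mul_sum, ← Finset.sum_sub_distrib,
        ← Finset.sum_sub_distrib, ← Finset.sum_add_distrib]
      exact Finset.sum_congr rfl fun i _ => by ring
    rw [h5, ← r1, ← r2, ← r3, ← r4]
    ring
  have e2 : ∀ i, w i - (z i:ℝ) * q i = (q i / p i) * (h i - z i * p i) := fun i => by
    rw [hwv i]; field_simp [(hp' i).ne']
  have keynn : ∀ i ∈ Finset.univ, 0 ≤ (w i - ((rx2 i:ℝ) - rx1 i)) * (h i - ((ry2 i:ℝ) - ry1 i)) := by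
    intro i _
    rw [hNX i, hNY i, e2 i]
    nlinarith [sq_nonneg (h i - z i * p i), div_nonneg (hq' i).le (hp' i).le]
  have hzero := (Finset.sum_eq_zero_iff_of_nonneg keynn).mp key
  intro i
  have hi := hzero i (Finset.mem_univ i)
  rw [hNX i, hNY i, e2 i] at hi
  have hhp : h i - (z i:ℝ) * p i = 0 := by
    rcases mul_eq_zero.mp hi with h0 | h0
    · rcases mul_eq_zero.mp h0 with h00 | h00
      · exact absurd h00 (div_pos (hq' i) (hp' i)).ne'
      · exact h00
    · exact h0
  have hww : w i - (z i:ℝ) * q i = 0 := by rw [e2 i, hhp, mul_zero]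
  exact ⟨z i, by linarith, by linarith⟩
end
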